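/- arXiv:1502.00969 — 10 statements merged into one kernel-verified Lean document; each statement's English description precedes it below -/
import Mathlib

section
/- Let p be a prime and M a positive integer. Let φ : ℤ/ℓℤ → ℕ_{>0} be a map such that p·φ(i) − φ(i+1) ≤ M for all i ∈ ℤ/ℓℤ. Then φ(i) ≤ M/(p−1) for every i ∈ ℤ/ℓℤ. -/
theorem Nat.sub_one_mul_le_of_mul_le_add {p a M : ℕ} (h : p * a ≤ a + M) : (p - 1) * a ≤ M := by
  rw [Nat.sub_one_mul]
  omega

/-- It suffices to check the bound at a point where `f` is maximal, since there `f (s j) ≤ f j`. -/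
theorem sub_one_mul_le_of_mul_le_comp_add {α : Type*} [Finite α] (s : α → α) (f : α → ℕ)
    {p M : ℕ} (h : ∀ i, p * f i ≤ f (s i) + M) (i : α) : (p - 1) * f i ≤ M := by
  have : Nonempty α := ⟨i⟩
  obtain ⟨j, hj⟩ := Finite.exists_max f
  have hmax : p * f j ≤ f j + M := (h j).trans (Nat.add_le_add_right (hj (s j)) M)
  calc (p - 1) * f i ≤ (p - 1) * f j := Nat.mul_le_mul_left _ (hj i)
    _ ≤ M := Nat.sub_one_mul_le_of_mul_le_add hmax

theorem stmt_0_general (p : ℕ) (M : ℕ)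
    (ℓ : ℕ) (hℓ : 0 < ℓ) (φ : ZMod ℓ → ℕ)
    (hjump : ∀ i : ZMod ℓ, p * φ i ≤ φ (i + 1) + M) :
    ∀ i : ZMod ℓ, (p - 1) * φ i ≤ M := by
  have : NeZero ℓ := ⟨hℓ.ne'⟩
  exact sub_one_mul_le_of_mul_le_comp_add (· + 1) φ hjump

/-- Lemma `max1`: a support map whose jumps `p·φ(i) − φ(i+1)` are all at most `M`
takes values at most `M/(p−1)`. -/
theorem stmt_0 (p : ℕ) (hp : p.Prime) (M : ℕ) (hM : 0 < M)
    (ℓ : ℕ) (hℓ : 0 < ℓ) (φ : ZMod ℓ → ℕ) (hpos : ∀ i, 0 < φ i)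
    (hjump : ∀ i : ZMod ℓ, p * φ i ≤ φ (i + 1) + M) :
    ∀ i : ZMod ℓ, (p - 1) * φ i ≤ M :=
  stmt_0_general p M ℓ hℓ φ hjump
end

section
/- Let p be a prime, s ≥ 1, and let (c_i)_{i≥1} be the increasing enumeration of the set F_s = { p^j · b : b ∈ E_s, j ≥ 0 }, where E_s is the set of the s smallest positive integers coprime to p. Then c_i = i for all 1 ≤ i ≤ s + ⌈s/(p−1)⌉ − 1, and c_i = p · c_{i−s} for all i ≥ s + ⌈s/(p−1)⌉. -/
/-!
Put `N = s + ⌈s/(p-1)⌉ - 1`. Every `m ∈ [1, N]` lies in `F` (its `p`-free part is at most `m`),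
and every element of `F` above `N` is `p` times an element of `F`. So for `N < p x` the elements
of `F` below `p x` are `[1, N]` together with the `p d`, `d ∈ F`, `N / p < d < x`, whence
`count F (p x) = count F x + N - N / p`. The choice of `N` gives `N / p = ⌈s/(p-1)⌉ - 1`, i.e.
`N - N / p = s`, and inverting the counting function turns this into `c (k + s) = p c k`.
-/

open Finset

def pMulClosure (p N m : ℕ) : Prop :=
  ∃ j b, 0 < b ∧ Nat.Coprime b p ∧ b ≤ N ∧ m = p ^ j * b

namespace pMulClosure

variable {p N m : ℕ}

theorem pos (hp : 0 < p) (h : pMulClosure p N m) : 0 < m := by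
  obtain ⟨j, b, hb, -, -, rfl⟩ := h
  positivity

theorem mul_left (h : pMulClosure p N m) : pMulClosure p N (p * m) := by
  obtain ⟨j, b, hb, hbp, hbN, rfl⟩ := h
  exact ⟨j + 1, b, hb, hbp, hbN, by ring⟩

theorem iff_pos_of_le (hp : p.Prime) (hm : m ≤ N) : pMulClosure p N m ↔ 0 < m := by
  refine ⟨pos hp.pos, fun hm0 => ?_⟩
  exact ⟨m.factorization p, m / p ^ m.factorization p, Nat.ordCompl_pos p hm0.ne',
    (Nat.coprime_ordCompl hp hm0.ne').symm, (Nat.div_le_self _ _).trans hm,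
    (Nat.ordProj_mul_ordCompl_eq_self m p).symm⟩

theorem iff_exists_mul_of_lt (hN : N < m) :
    pMulClosure p N m ↔ ∃ d, pMulClosure p N d ∧ p * d = m := by
  refine ⟨fun ⟨j, b, hb, hbp, hbN, hm⟩ => ?_, fun ⟨d, hd, hdm⟩ => hdm ▸ hd.mul_left⟩
  cases j with
  | zero => rw [pow_zero, one_mul] at hm; omega
  | succ j => exact ⟨p ^ j * b, ⟨j, b, hb, hbp, hbN, rfl⟩, by rw [hm]; ring⟩

theorem infinite (hp : 1 < p) (hN : 1 ≤ N) : (Set.ofPred (pMulClosure p N)).Infinite :=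
  Set.infinite_of_injective_forall_mem (Nat.pow_right_injective hp) fun j =>
    ⟨j, 1, one_pos, Nat.coprime_one_left p, hN, (mul_one _).symm⟩

open scoped Classical in
theorem count_of_le (hp : p.Prime) (hm : m ≤ N + 1) : Nat.count (pMulClosure p N) m = m - 1 := by
  induction m with
  | zero => rfl
  | succ m ih =>
    rw [Nat.count_succ, ih (by omega)]
    by_cases hm0 : m = 0
    · simp [hm0, (iff_pos_of_le hp (Nat.zero_le N)).not]
    · rw [if_pos ((iff_pos_of_le hp (by omega)).mpr (by omega))]
      omega

open scoped Classical in
theorem count_mul_add_div (hp : p.Prime) {x : ℕ} (hx : N < p * x) :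
    Nat.count (pMulClosure p N) (p * x) + N / p = Nat.count (pMulClosure p N) x + N := by
  rw [Nat.count_eq_card_filter_range, Nat.count_eq_card_filter_range,
    ← card_filter_add_card_filter_not (s := (range (p * x)).filter (pMulClosure p N)) (· ≤ N),
    ← card_filter_add_card_filter_not (s := (range x).filter (pMulClosure p N)) (p * · ≤ N)]
  have hlow : ((range (p * x)).filter (pMulClosure p N)).filter (· ≤ N) = Icc 1 N := by
    ext m
    simp only [mem_filter, mem_range, mem_Icc]
    constructor
    · rintro ⟨⟨-, hm⟩, hmN⟩
      exact ⟨(iff_pos_of_le hp hmN).mp hm, hmN⟩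
    · rintro ⟨hm0, hmN⟩
      exact ⟨⟨by omega, (iff_pos_of_le hp hmN).mpr hm0⟩, hmN⟩
  have hlowQuot : ((range x).filter (pMulClosure p N)).filter (p * · ≤ N) = Icc 1 (N / p) := by
    ext d
    simp only [mem_filter, mem_range, mem_Icc, Nat.le_div_iff_mul_le hp.pos, mul_comm d p]
    have hdN : p * d ≤ N → d ≤ N := (Nat.le_mul_of_pos_left d hp.pos).trans
    constructor
    · rintro ⟨⟨-, hd⟩, hpd⟩
      exact ⟨(iff_pos_of_le hp (hdN hpd)).mp hd, hpd⟩
    · rintro ⟨hd0, hpd⟩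
      exact ⟨⟨Nat.lt_of_mul_lt_mul_left (hpd.trans_lt hx),
        (iff_pos_of_le hp (hdN hpd)).mpr hd0⟩, hpd⟩
  have hhigh : ((range (p * x)).filter (pMulClosure p N)).filter (¬ · ≤ N) =
      (((range x).filter (pMulClosure p N)).filter (¬ p * · ≤ N)).image (p * ·) := by
    ext m
    simp only [mem_filter, mem_range, mem_image]
    constructor
    · rintro ⟨⟨hmx, hm⟩, hmN⟩
      obtain ⟨d, hd, rfl⟩ := (iff_exists_mul_of_lt (not_le.mp hmN)).mp hm
      exact ⟨d, ⟨⟨Nat.lt_of_mul_lt_mul_left hmx, hd⟩, hmN⟩, rfl⟩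
    · rintro ⟨d, ⟨⟨hdx, hd⟩, hdN⟩, rfl⟩
      exact ⟨⟨Nat.mul_lt_mul_of_pos_left hdx hp.pos, hd.mul_left⟩, hdN⟩
  rw [hlow, hlowQuot, hhigh, card_image_of_injective _ (mul_right_injective₀ hp.ne_zero),
    Nat.card_Icc, Nat.card_Icc, Nat.add_sub_cancel, Nat.add_sub_cancel]
  ring

theorem nth_of_lt (hp : p.Prime) {k : ℕ} (hk : k < N) : Nat.nth (pMulClosure p N) k = k + 1 := by
  classical
  have hmem : pMulClosure p N (k + 1) := (iff_pos_of_le hp hk).mpr k.succ_pos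
  simpa [count_of_le hp (by omega : k + 1 ≤ N + 1)] using Nat.nth_count hmem

theorem nth_add_sub_div (hp : p.Prime) (hN : 1 ≤ N) {k : ℕ} (hk : N / p ≤ k) :
    Nat.nth (pMulClosure p N) (k + (N - N / p)) = p * Nat.nth (pMulClosure p N) k := by
  classical
  have hinf := infinite hp.one_lt hN
  set c := Nat.nth (pMulClosure p N) k
  have hc : pMulClosure p N c := Nat.nth_mem_of_infinite hinf k
  have hkc : k + 1 ≤ c :=
    (Nat.add_le_add_left ((Nat.nth_mem_of_infinite hinf 0).pos hp.pos) k).trans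
      ((Nat.nth_strictMono hinf).add_le_nat k 0)
  have hNc : N < p * c := by
    rw [mul_comm]
    exact (Nat.div_lt_iff_lt_mul hp.pos).mp (by omega)
  have hcount : Nat.count (pMulClosure p N) (p * c) = k + (N - N / p) := by
    have := count_mul_add_div hp hNc
    rw [Nat.count_nth_of_infinite hinf] at this
    have := Nat.div_le_self N p
    omega
  rw [← hcount, Nat.nth_count hc.mul_left]

end pMulClosure

theorem add_ceil_div_sub_one_div {p s : ℕ} (hp : 1 < p) (hs : 0 < s) :
    (s + ⌈(s : ℚ) / (p - 1)⌉₊ - 1) / p = ⌈(s : ℚ) / (p - 1)⌉₊ - 1 := by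
  obtain ⟨d, rfl⟩ : ∃ d, p = d + 1 := ⟨p - 1, by omega⟩
  have hd : (0 : ℚ) < d := by exact_mod_cast (by omega : 0 < d)
  simp only [Nat.cast_add, Nat.cast_one, add_sub_cancel_right]
  obtain ⟨r, hr⟩ : ∃ r, ⌈(s : ℚ) / d⌉₊ = r + 1 :=
    ⟨_, (Nat.succ_pred_eq_of_pos (Nat.ceil_pos.mpr (by positivity))).symm⟩
  obtain ⟨hlo, hhi⟩ := (Nat.ceil_eq_iff (Nat.add_one_ne_zero r)).mp hr
  rw [Nat.add_sub_cancel, lt_div_iff₀ hd] at hlo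
  rw [div_le_iff₀ hd] at hhi
  have hlo' : r * d < s := by exact_mod_cast hlo
  have hhi' : s ≤ (r + 1) * d := by exact_mod_cast hhi
  rw [hr, ← add_assoc, Nat.add_sub_cancel, Nat.add_sub_cancel]
  apply Nat.div_eq_of_lt_le <;> linarith

/-- Lemma `min2`: let `(c_i)` be the increasing enumeration (0-indexed via `Nat.nth`)
of `F_s = { p^j · b : b ∈ E_s, j ≥ 0 }`, where `E_s` is the set of the `s` smallest
positive integers coprime to `p`, i.e. the positive integers coprime to `p` that are
at most `s + ⌈s/(p−1)⌉ − 1`. Then `c_i = i` for `1 ≤ i ≤ s + ⌈s/(p−1)⌉ − 1`, and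
`c_i = p · c_{i−s}` for `i ≥ s + ⌈s/(p−1)⌉`. -/
theorem stmt_4 (p s : ℕ) (hp : p.Prime) (hs : 1 ≤ s)
    (F : ℕ → Prop)
    (hF : ∀ m, F m ↔ ∃ j b, 0 < b ∧ Nat.Coprime b p ∧
      b ≤ s + ⌈(s : ℚ) / (p - 1)⌉₊ - 1 ∧ m = p ^ j * b) :
    (∀ i, 1 ≤ i → i ≤ s + ⌈(s : ℚ) / (p - 1)⌉₊ - 1 → Nat.nth F (i - 1) = i) ∧
    (∀ i, s + ⌈(s : ℚ) / (p - 1)⌉₊ ≤ i →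
      Nat.nth F (i - 1) = p * Nat.nth F (i - 1 - s)) := by
  obtain rfl : F = pMulClosure p (s + ⌈(s : ℚ) / (p - 1)⌉₊ - 1) :=
    funext fun m => propext (hF m)
  have hdiv := add_ceil_div_sub_one_div hp.one_lt hs
  set q := ⌈(s : ℚ) / (p - 1)⌉₊
  have hq : 1 ≤ q := Nat.one_le_ceil_iff.mpr <|
    div_pos (by exact_mod_cast hs) (sub_pos.mpr (by exact_mod_cast hp.one_lt))
  refine ⟨fun i hi1 hit => ?_, fun i hi => ?_⟩
  · rw [pMulClosure.nth_of_lt hp (by omega)]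
    omega
  · have := pMulClosure.nth_add_sub_div hp (N := s + q - 1) (k := i - 1 - s) (by omega) (by omega)
    rwa [hdiv, show i - 1 - s + (s + q - 1 - (q - 1)) = i - 1 by omega] at this
end

section
/- With notation as in the previous statement, for any n ≥ 1, write n = q·s + r with 1 ≤ r ≤ s (so r ∈ {1,…,s}, q ≥ 0). Then c_n ≥ p^q · r. -/
/-!
Every element of `F` in a window `[X, pX)` has the form `p^j b` with `b` one of the admissible
cofactors, and for a given `b` at most one power `p^j b` falls in such a window. Hence passing
from `X` to `pX` adds at most `s` elements of `F` (there are at most `s` admissible cofactors),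
and starting from `count F r ≤ r - 1` we get `count F (p^q r) ≤ qs + r - 1 = n - 1`, i.e.
the `n`-th element of `F` is at least `p^q r`.
-/

open Finset

lemma eq_of_pow_mul_mem_Ico {p X b j₁ j₂ : ℕ} (hp : 1 < p)
    (h₁ : p ^ j₁ * b ∈ Ico X (p * X)) (h₂ : p ^ j₂ * b ∈ Ico X (p * X)) : j₁ = j₂ := by
  wlog hle : j₁ ≤ j₂ generalizing j₁ j₂
  · exact (this h₂ h₁ (le_of_not_ge hle)).symm
  by_contra hne
  rw [mem_Ico] at h₁ h₂
  have hmul : p * (p ^ j₁ * b) ≤ p ^ j₂ * b := by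
    rw [← mul_assoc, ← pow_succ']
    exact Nat.mul_le_mul_right b (Nat.pow_le_pow_right (by omega) (by omega))
  have := Nat.mul_le_mul_left p h₁.1
  omega

lemma count_mul_le_count_add_card {p : ℕ} (hp : p.Prime) {F : ℕ → Prop} [DecidablePred F]
    (E : Finset ℕ) (hE : ∀ b ∈ E, ¬ p ∣ b) (hF : ∀ m, F m → ∃ j, ∃ b ∈ E, m = p ^ j * b)
    (X : ℕ) : Nat.count F (p * X) ≤ Nat.count F X + #E := by
  have window_card : #{m ∈ Ico X (p * X) | F m} ≤ #E := by
    refine card_le_card_of_injOn (ordCompl[p] ·) ?_ ?_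
    · intro m hm
      obtain ⟨j, b, hb, rfl⟩ := hF m (mem_filter.1 hm).2
      simpa only [Nat.ordCompl_pow_mul_of_not_dvd j hp (hE b hb), mem_coe] using hb
    · intro m₁ hm₁ m₂ hm₂ heq
      rw [coe_filter] at hm₁ hm₂
      obtain ⟨j₁, b₁, hb₁, rfl⟩ := hF m₁ hm₁.2
      obtain ⟨j₂, b₂, hb₂, rfl⟩ := hF m₂ hm₂.2
      simp only [Nat.ordCompl_pow_mul_of_not_dvd _ hp (hE _ hb₁),
        Nat.ordCompl_pow_mul_of_not_dvd _ hp (hE _ hb₂)] at heq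
      subst heq
      rw [eq_of_pow_mul_mem_Ico hp.one_lt hm₁.1 hm₂.1]
  rw [Nat.count_eq_card_filter_range, Nat.count_eq_card_filter_range]
  calc #{m ∈ range (p * X) | F m}
      ≤ #({m ∈ range X | F m} ∪ {m ∈ Ico X (p * X) | F m}) := by
        refine card_le_card fun m => ?_
        simp only [mem_union, mem_filter, mem_range, mem_Ico]
        rintro ⟨hm, hFm⟩
        by_cases hmX : m < X
        exacts [Or.inl ⟨hmX, hFm⟩, Or.inr ⟨⟨not_lt.1 hmX, hm⟩, hFm⟩]
    _ ≤ #{m ∈ range X | F m} + #{m ∈ Ico X (p * X) | F m} := card_union_le _ _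
    _ ≤ #{m ∈ range X | F m} + #E := Nat.add_le_add_left window_card _

lemma count_pow_mul_le {p : ℕ} (hp : p.Prime) {F : ℕ → Prop} [DecidablePred F]
    (E : Finset ℕ) (hE : ∀ b ∈ E, ¬ p ∣ b) (hF : ∀ m, F m → ∃ j, ∃ b ∈ E, m = p ^ j * b)
    (X q : ℕ) : Nat.count F (p ^ q * X) ≤ Nat.count F X + q * #E := by
  induction q with
  | zero => simp
  | succ q ih =>
    calc Nat.count F (p ^ (q + 1) * X) = Nat.count F (p * (p ^ q * X)) := by
          rw [pow_succ', mul_assoc]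
      _ ≤ Nat.count F (p ^ q * X) + #E := count_mul_le_count_add_card hp E hE hF _
      _ ≤ Nat.count F X + (q + 1) * #E := by linarith

lemma count_le_pred_of_not_zero {F : ℕ → Prop} [DecidablePred F] (h0 : ¬ F 0) (n : ℕ) :
    Nat.count F n ≤ n - 1 := by
  cases n with
  | zero => simp
  | succ n => simpa [Nat.count_succ', h0] using Nat.count_le _

lemma card_filter_not_dvd_Ioc (p B : ℕ) : #{b ∈ Ioc 0 B | ¬ p ∣ b} = B - B / p := by
  have := card_filter_add_card_filter_not (s := Ioc 0 B) (p ∣ ·)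
  rw [Nat.Ioc_filter_dvd_card_eq_div, Nat.card_Ioc] at this
  omega

lemma ceil_div_sub_one_mul_le {p : ℕ} (hp : 1 < p) (s : ℕ) :
    (⌈(s : ℚ) / (p - 1)⌉₊ - 1) * (p - 1) ≤ s := by
  set k := ⌈(s : ℚ) / (p - 1)⌉₊
  rcases Nat.eq_zero_or_pos k with hk | hk
  · simp [hk]
  have hp' : (0 : ℚ) < p - 1 := by
    have : (1 : ℚ) < p := by exact_mod_cast hp
    linarith
  have hlt : ((k - 1 : ℕ) : ℚ) * (p - 1) < s :=
    (lt_div_iff₀ hp').1 (Nat.lt_ceil.1 (Nat.sub_one_lt_of_lt hk))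
  rw [← Nat.cast_le (α := ℚ), Nat.cast_mul, Nat.cast_sub hp.le, Nat.cast_one]
  exact hlt.le

lemma card_filter_not_dvd_Ioc_le {p : ℕ} (hp : 1 < p) (s : ℕ) :
    #{b ∈ Ioc 0 (s + ⌈(s : ℚ) / (p - 1)⌉₊ - 1) | ¬ p ∣ b} ≤ s := by
  rw [card_filter_not_dvd_Ioc]
  have hmul := ceil_div_sub_one_mul_le hp s
  generalize ⌈(s : ℚ) / (p - 1)⌉₊ = k at hmul ⊢
  obtain _ | k := k
  · exact (Nat.sub_le _ _).trans (Nat.sub_le _ _)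
  rw [← Nat.add_assoc, Nat.add_sub_cancel]
  have hdiv : k ≤ (s + k) / p := by
    rw [Nat.le_div_iff_mul_le (by omega)]
    calc k * p = k * (p - 1) + k := by rw [← Nat.mul_add_one, Nat.sub_add_cancel hp.le]
      _ ≤ s + k := Nat.add_le_add_right hmul k
  omega

theorem stmt_5_general (p s : ℕ) (hp : p.Prime)
    (F : ℕ → Prop)
    (hF : ∀ m, F m ↔ ∃ j b, 0 < b ∧ Nat.Coprime b p ∧
      b ≤ s + ⌈(s : ℚ) / (p - 1)⌉₊ - 1 ∧ m = p ^ j * b)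
    (n q r : ℕ) (hn : n = q * s + r) (hr1 : 1 ≤ r) (hrs : r ≤ s) :
    p ^ q * r ≤ Nat.nth F (n - 1) := by
  classical
  set E := {b ∈ Ioc 0 (s + ⌈(s : ℚ) / (p - 1)⌉₊ - 1) | ¬ p ∣ b}
  have hE : ∀ b ∈ E, ¬ p ∣ b := fun b hb => (mem_filter.1 hb).2
  have hFE : ∀ m, F m → ∃ j, ∃ b ∈ E, m = p ^ j * b := by
    intro m hm
    obtain ⟨j, b, hb0, hcop, hbB, rfl⟩ := (hF m).1 hm
    exact ⟨j, b, mem_filter.2 ⟨mem_Ioc.2 ⟨hb0, hbB⟩, (hp.coprime_iff_not_dvd.1 hcop.symm)⟩, rfl⟩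
  have hF0 : ¬ F 0 := fun h => by
    obtain ⟨j, b, hb0, -, -, h0⟩ := (hF 0).1 h
    exact absurd h0.symm (Nat.mul_ne_zero (pow_ne_zero j hp.ne_zero) hb0.ne')
  have hinf : (Set.ofPred F).Infinite := by
    refine Set.infinite_of_injective_forall_mem (Nat.pow_right_injective hp.two_le) fun j => ?_
    refine (hF _).2 ⟨j, 1, one_pos, Nat.coprime_one_left p, ?_, (mul_one _).symm⟩
    have : 0 < ⌈(s : ℚ) / (p - 1)⌉₊ := by
      have : (1 : ℚ) < p := by exact_mod_cast hp.one_lt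
      exact Nat.ceil_pos.2 (div_pos (by exact_mod_cast hr1.trans hrs) (by linarith))
    omega
  refine (Nat.count_le_iff_le_nth hinf).1 ?_
  calc Nat.count F (p ^ q * r) ≤ Nat.count F r + q * #E := count_pow_mul_le hp E hE hFE r q
    _ ≤ (r - 1) + q * s := Nat.add_le_add (count_le_pred_of_not_zero hF0 r)
        (Nat.mul_le_mul_left q (card_filter_not_dvd_Ioc_le hp.one_lt s))
    _ = n - 1 := by omega

/-- Lemma `min3`: with `(c_i)` the increasing enumeration of
`F_s = { p^j · b : b ∈ E_s, j ≥ 0 }` (`E_s` the `s` smallest positive integers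
coprime to `p`), if `n = q·s + r` with `1 ≤ r ≤ s`, then `c_n ≥ p^q · r`. -/
theorem stmt_5 (p s : ℕ) (hp : p.Prime) (hs : 1 ≤ s)
    (F : ℕ → Prop)
    (hF : ∀ m, F m ↔ ∃ j b, 0 < b ∧ Nat.Coprime b p ∧
      b ≤ s + ⌈(s : ℚ) / (p - 1)⌉₊ - 1 ∧ m = p ^ j * b)
    (n q r : ℕ) (hn : n = q * s + r) (hr1 : 1 ≤ r) (hrs : r ≤ s) :
    p ^ q * r ≤ Nat.nth F (n - 1) :=
  stmt_5_general p s hp F hF n q r hn hr1 hrs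
end

section
/- Let p be a prime, s ≥ 1, ℓ ≥ 1, and write ℓ = q·s + r with 1 ≤ r ≤ s. Then the sum of the first ℓ terms of the sequence (c_i) satisfies ∑_{i=1}^{ℓ} c_i ≥ (s(s+1)/2)·(p^q − 1)/(p−1) + (r(r+1)/2)·p^q. -/
/-!
Among the elements of `F` below `p^j k`, those divisible by `p^j` are `p^j m` with `0 < m < k`,
and the others are `p^i b` with `i < j` and `b` admissible, i.e. `0 < b ≤ N := s + ⌈s/(p-1)⌉ - 1`
and `p ∤ b`. There are `N - ⌊N/p⌋ ≤ s` admissible values, so at most `j s + k - 1` elements of `F`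
lie below `p^j k`, that is `c_{js+k} ≥ p^j k`. Summing over consecutive blocks of `s` indices
gives the bound.
-/

open Finset

section Enumeration

variable {p : ℕ} {E : Finset ℕ} {F : ℕ → Prop}

theorem count_pow_mul_succ_le [DecidablePred F] (hp : p ≠ 0) (hE : 0 ∉ E)
    (hF : ∀ m, F m ↔ ∃ i, ∃ b ∈ E, m = p ^ i * b) (j k : ℕ) :
    Nat.count F (p ^ j * (k + 1)) ≤ j * #E + k := by
  have hsub : {m ∈ range (p ^ j * (k + 1)) | F m} ⊆
      (Ioo 0 (k + 1)).image (p ^ j * ·) ∪ (range j ×ˢ E).image (fun x ↦ p ^ x.1 * x.2) := by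
    intro m hm
    obtain ⟨hm, i, b, hb, rfl⟩ := by simpa [hF] using hm
    have hb0 : b ≠ 0 := ne_of_mem_of_not_mem hb hE
    by_cases hij : j ≤ i
    · obtain ⟨d, rfl⟩ := Nat.exists_eq_add_of_le hij
      rw [pow_add, mul_assoc] at hm ⊢
      refine mem_union_left _ (mem_image.2 ⟨p ^ d * b, ?_, rfl⟩)
      simpa [Nat.pos_iff_ne_zero, hp, hb0] using Nat.lt_of_mul_lt_mul_left hm
    · exact mem_union_right _ (mem_image.2 ⟨(i, b), by simpa [hb] using hij, rfl⟩)
  calc Nat.count F (p ^ j * (k + 1))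
      = #{m ∈ range (p ^ j * (k + 1)) | F m} := Nat.count_eq_card_filter_range F _
    _ ≤ k + j * #E := (card_le_card hsub).trans <| (card_union_le _ _).trans <|
        add_le_add (card_image_le.trans (by simp)) (card_image_le.trans (by simp))
    _ = j * #E + k := add_comm _ _

theorem infinite_of_forall_iff_pow_mul (hp : 1 < p) (h1 : 1 ∈ E)
    (hF : ∀ m, F m ↔ ∃ i, ∃ b ∈ E, m = p ^ i * b) : (Set.ofPred F).Infinite :=
  Set.infinite_of_injective_forall_mem (Nat.pow_right_injective hp)
    fun i ↦ (hF _).2 ⟨i, 1, h1, (mul_one _).symm⟩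

theorem pow_mul_succ_le_nth {s : ℕ} (hp : 1 < p) (h1 : 1 ∈ E) (hE : 0 ∉ E) (hEs : #E ≤ s)
    (hF : ∀ m, F m ↔ ∃ i, ∃ b ∈ E, m = p ^ i * b) (j k : ℕ) :
    p ^ j * (k + 1) ≤ Nat.nth F (j * s + k) := by
  classical
  refine (Nat.count_le_iff_le_nth (infinite_of_forall_iff_pow_mul hp h1 hF)).1 ?_
  exact (count_pow_mul_succ_le (by omega) hE hF j k).trans (by gcongr)

end Enumeration

theorem card_filter_coprime_Ioc_le {p : ℕ} (hp : p.Prime) (s : ℕ) :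
    #{b ∈ Ioc 0 (s + ⌈(s : ℚ) / (p - 1)⌉₊ - 1) | b.Coprime p} ≤ s := by
  have hceil : (⌈(s : ℚ) / (p - 1)⌉₊ - 1) * p ≤ s + ⌈(s : ℚ) / (p - 1)⌉₊ - 1 := by
    obtain ht0 | ht0 := Nat.eq_zero_or_pos ⌈(s : ℚ) / (p - 1)⌉₊
    · simp [ht0]
    have hp1 : (0 : ℚ) < p - 1 := sub_pos.2 (by exact_mod_cast hp.one_lt)
    have h := (lt_div_iff₀ hp1).1 (Nat.lt_ceil.1 (Nat.sub_one_lt_of_lt ht0))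
    rw [← Nat.cast_le (α := ℚ)]
    push_cast [ht0, Nat.cast_sub (le_add_left ht0 : 1 ≤ s + _)] at h ⊢
    linarith
  generalize ⌈(s : ℚ) / (p - 1)⌉₊ = t at hceil ⊢
  have hsplit := card_filter_add_card_filter_not (s := Ioc 0 (s + t - 1)) (p ∣ ·)
  rw [Nat.Ioc_filter_dvd_card_eq_div, Nat.card_Ioc] at hsplit
  rw [filter_congr fun b _ ↦ Nat.coprime_comm.trans hp.coprime_iff_not_dvd]
  have := (Nat.le_div_iff_mul_le hp.pos).2 hceil
  omega

section BlockSums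

variable {R : Type*} [Field R] [LinearOrder R] [IsStrictOrderedRing R] {c : ℕ → R} {x : R}
  {s : ℕ}

theorem triangular_mul_pow_le_sum_range (hc : ∀ j k : ℕ, x ^ j * (k + 1) ≤ c (j * s + k))
    (j r : ℕ) : r * (r + 1) / 2 * x ^ j ≤ ∑ k ∈ range r, c (j * s + k) := by
  induction r with
  | zero => simp
  | succ r ih =>
    rw [sum_range_succ]
    push_cast
    linarith [hc j r]

theorem triangular_mul_geom_sum_le_sum_range_mul
    (hc : ∀ j k : ℕ, x ^ j * (k + 1) ≤ c (j * s + k)) (q : ℕ) :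
    s * (s + 1) / 2 * ∑ j ∈ range q, x ^ j ≤ ∑ i ∈ range (q * s), c i := by
  induction q with
  | zero => simp
  | succ q ih =>
    rw [sum_range_succ, mul_add, Nat.succ_mul, sum_range_add]
    exact add_le_add ih (triangular_mul_pow_le_sum_range hc q s)

theorem le_sum_range_mul_add (hc : ∀ j k : ℕ, x ^ j * (k + 1) ≤ c (j * s + k)) (q r : ℕ) :
    s * (s + 1) / 2 * ∑ j ∈ range q, x ^ j + r * (r + 1) / 2 * x ^ q
      ≤ ∑ i ∈ range (q * s + r), c i := by
  rw [sum_range_add]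
  exact add_le_add (triangular_mul_geom_sum_le_sum_range_mul hc q)
    (triangular_mul_pow_le_sum_range hc q r)

end BlockSums

theorem stmt_6_general (p s : ℕ) (hp : p.Prime) (hs : 1 ≤ s)
    (F : ℕ → Prop)
    (hF : ∀ m, F m ↔ ∃ j b, 0 < b ∧ Nat.Coprime b p ∧
      b ≤ s + ⌈(s : ℚ) / (p - 1)⌉₊ - 1 ∧ m = p ^ j * b)
    (ℓ q r : ℕ) (hl : ℓ = q * s + r) :
    ((s : ℚ) * (s + 1) / 2) * (((p : ℚ) ^ q - 1) / (p - 1))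
      + ((r : ℚ) * (r + 1) / 2) * (p : ℚ) ^ q
      ≤ ∑ i ∈ Finset.Icc 1 ℓ, (Nat.nth F (i - 1) : ℚ) := by
  set E := {b ∈ Ioc 0 (s + ⌈(s : ℚ) / (p - 1)⌉₊ - 1) | b.Coprime p}
  have hFE : ∀ m, F m ↔ ∃ i, ∃ b ∈ E, m = p ^ i * b := by
    simp [hF, E, and_assoc, and_left_comm]
  have h1 : 1 ∈ E := by
    have : 0 < ⌈(s : ℚ) / (p - 1)⌉₊ :=
      Nat.ceil_pos.2 (div_pos (by exact_mod_cast hs) (sub_pos.2 (by exact_mod_cast hp.one_lt)))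
    exact mem_filter.2 ⟨mem_Ioc.2 ⟨one_pos, by omega⟩, Nat.coprime_one_left p⟩
  have h0 : 0 ∉ E := by simp [E]
  have hc (j k : ℕ) : (p : ℚ) ^ j * (k + 1) ≤ Nat.nth F (j * s + k) := by
    exact_mod_cast pow_mul_succ_le_nth hp.one_lt h1 h0 (card_filter_coprime_Ioc_le hp s) hFE j k
  rw [← geom_sum_eq (by exact_mod_cast hp.one_lt.ne'), ← Ico_add_one_right_eq_Icc,
    sum_Ico_eq_sum_range, hl]
  simpa using le_sum_range_mul_add hc q r

/-- Part of Proposition `bou`: with `(c_i)` the increasing enumeration of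
`F_s = { p^j · b : b ∈ E_s, j ≥ 0 }`, and `ℓ = q·s + r`, `1 ≤ r ≤ s`, one has
`∑_{i=1}^{ℓ} c_i ≥ (s(s+1)/2)·(p^q − 1)/(p−1) + (r(r+1)/2)·p^q`. -/
theorem stmt_6 (p s : ℕ) (hp : p.Prime) (hs : 1 ≤ s)
    (F : ℕ → Prop)
    (hF : ∀ m, F m ↔ ∃ j b, 0 < b ∧ Nat.Coprime b p ∧
      b ≤ s + ⌈(s : ℚ) / (p - 1)⌉₊ - 1 ∧ m = p ^ j * b)
    (ℓ q r : ℕ) (hl : ℓ = q * s + r) (hr1 : 1 ≤ r) (hrs : r ≤ s) :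
    ((s : ℚ) * (s + 1) / 2) * (((p : ℚ) ^ q - 1) / (p - 1))
      + ((r : ℚ) * (r + 1) / 2) * (p : ℚ) ^ q
      ≤ ∑ i ∈ Finset.Icc 1 ℓ, (Nat.nth F (i - 1) : ℚ) :=
  stmt_6_general p s hp hs F hF ℓ q r hl
end

section
/- Let p be an odd prime and n ≥ 1. There do not exist integers w, ℓ with w ≥ 3 and n·w + w/2 < ℓ ≤ n·w + w·(p−2)/(p−1) such that, writing ℓ = n·w + i, the inequality (w(w+1)/2)·(p^n − 1)/(p−1) + (i(i+1)/2)·p^n ≤ w·(p^{n+1} − 2)/(p−1) holds with w ≥ 6; in fact the inequality (w(w+1)/2)·(p^n−1) + (i(i+1)/2)·p^n·(p−1) ≤ w·(p^{n+1} − 2) with i > w/2 forces w < 6. -/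
/-!
Multiplying out by `p - 1` and discarding the nonnegative first term leaves
`i(i+1)/2 · (p - 1) ≤ w · p`, and `p ≥ 5` gives `p / (p - 1) ≤ 5/4`, so `2 i (i+1) ≤ 5 w`.
Since `2 i ≥ w + 1`, this forces `(w + 1)(w + 3) ≤ 10 w`, i.e. `w² - 6w + 3 ≤ 0`, so `w ≤ 5`.
-/

section OrderedField

variable {K : Type*} [Field K] [LinearOrder K] [IsStrictOrderedRing K]

theorem mul_sub_one_le_mul_of_add_le_div {p a b w : K} {n : ℕ} (hp : 1 < p) (ha : 0 ≤ a)
    (hw : 0 ≤ w)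
    (h : a * ((p ^ n - 1) / (p - 1)) + b * p ^ n ≤ w * ((p ^ (n + 1) - 2) / (p - 1))) :
    b * (p - 1) ≤ w * p := by
  have hp1 : 0 < p - 1 := sub_pos.mpr hp
  have hpn : 0 < p ^ n := pow_pos (zero_lt_one.trans hp) n
  have hgeom : 0 ≤ a * ((p ^ n - 1) / (p - 1)) :=
    mul_nonneg ha (div_nonneg (sub_nonneg.mpr (one_le_pow₀ hp.le)) hp1.le)
  have hcleared : b * p ^ n * (p - 1) ≤ w * (p ^ (n + 1) - 2) := by
    rw [← le_div_iff₀ hp1, mul_div_assoc]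
    linarith
  refine le_of_mul_le_mul_right ?_ hpn
  calc b * (p - 1) * p ^ n = b * p ^ n * (p - 1) := by ring
    _ ≤ w * (p ^ (n + 1) - 2) := hcleared
    _ ≤ w * p * p ^ n := by rw [pow_succ]; nlinarith

theorem four_mul_le_five_mul_of_mul_sub_one_le {p b w : K} (hp : 5 ≤ p) (hw : 0 ≤ w)
    (h : b * (p - 1) ≤ w * p) : 4 * b ≤ 5 * w := by
  have hp1 : 0 < p - 1 := by linarith
  refine le_of_mul_le_mul_right ?_ hp1
  nlinarith

end OrderedField

theorem succ_mul_add_three_le_four_mul_triangle {w i : ℕ} (h : w < 2 * i) :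
    (w + 1) * (w + 3) ≤ 4 * (i * (i + 1)) := by
  calc (w + 1) * (w + 3) ≤ (2 * i) * (2 * i + 2) := Nat.mul_le_mul (by omega) (by omega)
    _ = 4 * (i * (i + 1)) := by ring

theorem lt_six_of_succ_mul_add_three_le {w : ℕ} (h : (w + 1) * (w + 3) ≤ 10 * w) : w < 6 := by
  nlinarith

theorem stmt_10_general (p n w i : ℕ) (hp5 : 5 ≤ p)
    (hi : (w : ℚ) / 2 < i)
    (hineq : ((w : ℚ) * (w + 1) / 2) * (((p : ℚ) ^ n - 1) / (p - 1))
      + ((i : ℚ) * (i + 1) / 2) * (p : ℚ) ^ n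
      ≤ (w : ℚ) * (((p : ℚ) ^ (n + 1) - 2) / (p - 1))) :
    w < 6 := by
  have hp : (5 : ℚ) ≤ p := by exact_mod_cast hp5
  have hcleared := mul_sub_one_le_mul_of_add_le_div (by linarith) (by positivity)
    (Nat.cast_nonneg w) hineq
  have htriangle : 4 * (i * (i + 1)) ≤ 10 * w := by
    have := four_mul_le_five_mul_of_mul_sub_one_le hp (Nat.cast_nonneg w) hcleared
    exact_mod_cast (by linarith : (4 * (i * (i + 1)) : ℚ) ≤ 10 * w)
  have hwi : w < 2 * i := by exact_mod_cast (by linarith : (w : ℚ) < 2 * i)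
  exact lt_six_of_succ_mul_add_three_le
    ((succ_mul_add_three_le_four_mul_triangle hwi).trans htriangle)

/-- Key estimate in the proof of Proposition `cas1`: if `p ≥ 5` is prime, `n ≥ 1`,
`w ≥ 3`, `i > w/2`, and
`(w(w+1)/2)·(p^n−1)/(p−1) + (i(i+1)/2)·p^n ≤ w·(p^{n+1}−2)/(p−1)`, then `w < 6`. -/
theorem stmt_10 (p n w i : ℕ) (hp : p.Prime) (hp5 : 5 ≤ p) (hn : 1 ≤ n)
    (hw : 3 ≤ w) (hi : (w : ℚ) / 2 < i)
    (hineq : ((w : ℚ) * (w + 1) / 2) * (((p : ℚ) ^ n - 1) / (p - 1))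
      + ((i : ℚ) * (i + 1) / 2) * (p : ℚ) ^ n
      ≤ (w : ℚ) * (((p : ℚ) ^ (n + 1) - 2) / (p - 1))) :
    w < 6 :=
  stmt_10_general p n w i hp5 hi hineq
end

section
/- Let p ≥ 5 be a prime and D = {1,…,p−2}. Every solution (u_d)_{d∈D} of ∑ d·u_d ≡ 0 (mod p−1), ∑ d·u_d > 0, has p-weight ∑ s_p(u_d) ≥ 2. Consequently the p-density of D equals 2/(p−1). -/
/-- A length-`ℓ` solution of the modular equation associated to `D` and `p`:
a tuple `(u_d)_{d∈D}` (encoded as a function vanishing off `D`) with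
`0 ≤ u_d ≤ p^ℓ − 1`, `∑ d·u_d ≡ 0 mod p^ℓ − 1` and `∑ d·u_d > 0`. -/
def IsModSolution (p : ℕ) (D : Finset ℕ) (ℓ : ℕ) (u : ℕ → ℕ) : Prop :=
  (∀ d, d ∉ D → u d = 0) ∧ (∀ d, u d ≤ p ^ ℓ - 1) ∧
  (p ^ ℓ - 1) ∣ ∑ d ∈ D, d * u d ∧ 0 < ∑ d ∈ D, d * u d

/-- The `p`-weight of a solution: the sum of the base-`p` digit sums of its entries. -/
def solWeight (p : ℕ) (D : Finset ℕ) (u : ℕ → ℕ) : ℕ :=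
  ∑ d ∈ D, (Nat.digits p (u d)).sum

/-- The set of densities `weight/(ℓ(p−1))` of solutions of all lengths `ℓ ≥ 1`. -/
def densitySet (p : ℕ) (D : Finset ℕ) : Set ℝ :=
  {x | ∃ ℓ u, 0 < ℓ ∧ IsModSolution p D ℓ u ∧
    x = (solWeight p D u : ℝ) / (ℓ * (p - 1))}

/-!
Modulo `p - 1` every `u_d` may be replaced by its digit sum, so `T = ∑ d * s_p(u_d)` is a
positive multiple of `p - 1`; as `T ≤ (p - 2) * weight`, the weight is at least `2`.

For a solution of length `ℓ`, rotate the `ℓ`-digit base-`p` expansions of all `u_d` together by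
`i` places and put `S_i = ∑ d * rot_i(u_d)`. Then `p * S_{i+1} = S_i + (p^ℓ - 1) * c_i`, where
`c_i = ∑ d * digit_i(u_d) ≤ (p - 2) * k_i` and `k_i = ∑ digit_i(u_d)`. Since `p` is prime to
`p^ℓ - 1`, every `S_i` is `(p^ℓ - 1) * m_i` with `m_i ≥ 1`, and `p * m_{i+1} = m_i + c_i`.
Integrality forces `k_i ≥ m_{i+1} - m_i + 2`, and summing around the cycle `m_ℓ = m_0` gives
`weight = ∑ k_i ≥ 2ℓ`. The length-one solution `u_1 = u_{p-2} = 1` has density `2/(p - 1)`.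
-/

open Finset

theorem Nat.digits_sum_eq_sum_range {b : ℕ} (hb : 2 ≤ b) :
    ∀ {ℓ x : ℕ}, x < b ^ ℓ → (Nat.digits b x).sum = ∑ i ∈ range ℓ, x / b ^ i % b
  | 0, x, hx => by simp_all
  | ℓ + 1, x, hx => by
    rcases Nat.eq_zero_or_pos x with rfl | hx0
    · simp
    have hdiv : x / b < b ^ ℓ := Nat.div_lt_of_lt_mul (by rwa [← pow_succ'])
    rw [Nat.digits_def' (by omega) hx0, List.sum_cons, Nat.digits_sum_eq_sum_range hb hdiv,
      sum_range_succ', pow_zero, Nat.div_one, add_comm]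
    simp only [Nat.div_div_eq_div_mul, pow_succ']

theorem Nat.digits_sum_pos {b x : ℕ} (hx : x ≠ 0) : 0 < (Nat.digits b x).sum :=
  (Nat.pos_of_ne_zero (Nat.getLast_digit_ne_zero b hx)).trans_le
    (List.le_sum_of_mem (List.getLast_mem _))

/-- The number whose `ℓ`-digit base-`b` expansion is that of `x` rotated cyclically so that
digit `i` of `x` becomes the units digit. -/
def digitRotation (b ℓ i x : ℕ) : ℕ := x / b ^ i + x % b ^ i * b ^ (ℓ - i)

section digitRotation

variable {b ℓ i x : ℕ}

@[simp]
theorem digitRotation_zero : digitRotation b ℓ 0 x = x := by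
  simp [digitRotation, Nat.mod_one]

theorem digitRotation_self (hx : x < b ^ ℓ) : digitRotation b ℓ ℓ x = x := by
  simp [digitRotation, Nat.div_eq_of_lt hx, Nat.mod_eq_of_lt hx]

theorem mul_digitRotation_succ (hb : 0 < b) (hi : i < ℓ) :
    b * digitRotation b ℓ (i + 1) x =
      digitRotation b ℓ i x + x / b ^ i % b * (b ^ ℓ - 1) := by
  obtain ⟨j, rfl⟩ := Nat.exists_eq_add_of_lt hi
  have hdiv : b * (x / b ^ (i + 1)) + x / b ^ i % b = x / b ^ i := by
    rw [pow_succ, ← Nat.div_div_eq_div_mul, Nat.div_add_mod]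
  have hmod : x % b ^ (i + 1) = x % b ^ i + b ^ i * (x / b ^ i % b) := Nat.mod_pow_succ
  have hpow : 1 ≤ b ^ (i + j + 1) := Nat.one_le_pow _ _ hb
  simp only [digitRotation, show i + j + 1 - (i + 1) = j by omega,
    show i + j + 1 - i = j + 1 by omega, hmod]
  generalize x / b ^ (i + 1) = q, x / b ^ i % b = a, x % b ^ i = r at *
  rw [← hdiv]
  zify [hpow]
  ring

theorem add_two_le_of_mul_le {p a b k : ℕ} (hp : 3 ≤ p) (ha : 1 ≤ a) (hb : 1 ≤ b)
    (h : p * a ≤ b + (p - 2) * k) : a + 2 ≤ b + k := by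
  by_contra! hlt
  obtain ⟨q, rfl⟩ := Nat.exists_eq_add_of_le' hp
  rw [show q + 3 - 2 = q + 1 by omega] at h
  nlinarith [Nat.mul_le_mul_left (q + 1) (show k + b ≤ a + 1 by omega),
    Nat.mul_le_mul_left q hb]

theorem two_mul_le_sum_of_cyclic {p ℓ : ℕ} {m k : ℕ → ℕ} (hp : 3 ≤ p)
    (hm : ∀ i ≤ ℓ, 1 ≤ m i) (hcyc : m ℓ = m 0)
    (hstep : ∀ i < ℓ, p * m (i + 1) ≤ m i + (p - 2) * k i) :
    2 * ℓ ≤ ∑ i ∈ range ℓ, k i := by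
  have hsum : ∑ i ∈ range ℓ, (m (i + 1) + 2) ≤ ∑ i ∈ range ℓ, (m i + k i) :=
    sum_le_sum fun i hi =>
      have hi : i < ℓ := mem_range.mp hi
      add_two_le_of_mul_le hp (hm _ hi) (hm _ hi.le) (hstep i hi)
  have htel : ∑ i ∈ range ℓ, m (i + 1) = ∑ i ∈ range ℓ, m i := by
    have := sum_range_succ' m ℓ
    rw [sum_range_succ, hcyc] at this
    omega
  simp only [sum_add_distrib, sum_const, card_range, smul_eq_mul, htel] at hsum
  omega

theorem dvd_and_pos_of_mul_eq_add {p N ℓ : ℕ} {S c : ℕ → ℕ} (hN : N.Coprime p)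
    (hrec : ∀ i < ℓ, p * S (i + 1) = S i + N * c i) (hdvd : N ∣ S 0) (hpos : 0 < S 0) :
    ∀ i ≤ ℓ, N ∣ S i ∧ 0 < S i
  | 0, _ => ⟨hdvd, hpos⟩
  | i + 1, hi => by
    obtain ⟨hdvd_i, hpos_i⟩ := dvd_and_pos_of_mul_eq_add hN hrec hdvd hpos i (by omega)
    have h := hrec i (by omega)
    refine ⟨hN.dvd_of_dvd_mul_left ?_, Nat.pos_of_ne_zero fun h0 => ?_⟩
    · rw [h]
      exact dvd_add hdvd_i (dvd_mul_right _ _)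
    · rw [h0, mul_zero] at h
      omega

theorem Nat.coprime_pow_sub_one_self {p ℓ : ℕ} (hp : 0 < p) (hℓ : ℓ ≠ 0) :
    (p ^ ℓ - 1).Coprime p :=
  ((Nat.coprime_self_sub_left (Nat.one_le_pow _ _ hp)).mpr
    (Nat.coprime_one_left _)).coprime_dvd_right (dvd_pow_self p hℓ)

theorem two_mul_le_solWeight {p ℓ : ℕ} {D : Finset ℕ} {u : ℕ → ℕ} (hp : 3 ≤ p)
    (hD : ∀ d ∈ D, d ≤ p - 2) (hℓ : 0 < ℓ) (hu : IsModSolution p D ℓ u) :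
    2 * ℓ ≤ solWeight p D u := by
  obtain ⟨-, hu_le, hdvd, hpos⟩ := hu
  have hu_lt : ∀ d, u d < p ^ ℓ := fun d =>
    (hu_le d).trans_lt (Nat.sub_lt (Nat.pow_pos (by omega)) one_pos)
  set N := p ^ ℓ - 1
  have hN : 0 < N := Nat.sub_pos_of_lt (Nat.one_lt_pow hℓ.ne' (by omega))
  set S : ℕ → ℕ := fun i => ∑ d ∈ D, d * digitRotation p ℓ i (u d) with hS
  set digit : ℕ → ℕ → ℕ := fun i d => u d / p ^ i % p
  have hrec : ∀ i < ℓ, p * S (i + 1) = S i + N * ∑ d ∈ D, d * digit i d := by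
    intro i hi
    simp only [hS, mul_sum, ← sum_add_distrib]
    refine sum_congr rfl fun d _ => ?_
    rw [mul_left_comm, mul_digitRotation_succ (by omega) hi]
    ring
  have hS_mul := dvd_and_pos_of_mul_eq_add (Nat.coprime_pow_sub_one_self (by omega) hℓ.ne')
    hrec (by simpa [hS] using hdvd) (by simpa [hS] using hpos)
  have hweight : solWeight p D u = ∑ i ∈ range ℓ, ∑ d ∈ D, digit i d := by
    rw [solWeight, sum_comm]
    exact sum_congr rfl fun d _ => Nat.digits_sum_eq_sum_range (by omega) (hu_lt d)
  rw [hweight]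
  refine two_mul_le_sum_of_cyclic (m := fun i => S i / N) hp
    (fun i hi => Nat.div_pos (Nat.le_of_dvd (hS_mul i hi).2 (hS_mul i hi).1) hN) ?_ ?_
  · simp only [hS, digitRotation_self (hu_lt _), digitRotation_zero]
  · intro i hi
    rw [← Nat.mul_div_assoc _ (hS_mul _ hi).1, hrec i hi, Nat.add_mul_div_left _ _ hN,
      mul_sum]
    gcongr with d hd
    exact hD d hd

theorem two_le_solWeight_of_dvd {p : ℕ} {D : Finset ℕ} {u : ℕ → ℕ} (hp : 3 ≤ p)
    (hD : ∀ d ∈ D, d ≤ p - 2) (hdvd : (p - 1) ∣ ∑ d ∈ D, d * u d)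
    (hpos : 0 < ∑ d ∈ D, d * u d) :
    2 ≤ solWeight p D u := by
  set T := ∑ d ∈ D, d * (Nat.digits p (u d)).sum
  have hp_mod : p % (p - 1) = 1 := by
    obtain ⟨q, rfl⟩ := Nat.exists_eq_add_of_le' hp
    rw [show q + 3 = 1 + (q + 2) by omega, Nat.add_sub_cancel_left, Nat.add_mod_right]
    exact Nat.mod_eq_of_lt (by omega)
  have hT_dvd : (p - 1) ∣ T := (Nat.modEq_zero_iff_dvd.mp <|
    (Nat.ModEq.sum fun d _ => (Nat.modEq_digits_sum _ _ hp_mod (u d)).mul_left d).symm.trans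
      (Nat.modEq_zero_iff_dvd.mpr hdvd))
  have hT_pos : 0 < T := by
    obtain ⟨d, hd, hdu⟩ := sum_pos_iff.mp hpos
    refine sum_pos_iff.mpr ⟨d, hd, Nat.mul_pos (Nat.pos_of_mul_pos_right hdu) ?_⟩
    exact Nat.digits_sum_pos (Nat.pos_of_mul_pos_left hdu).ne'
  have hT_le : T ≤ (p - 2) * solWeight p D u := by
    rw [solWeight, mul_sum]
    exact sum_le_sum fun d hd => Nat.mul_le_mul_right _ (hD d hd)
  have := Nat.le_of_dvd hT_pos hT_dvd
  by_contra! h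
  interval_cases (solWeight p D u) <;> omega

def endpointSolution (p d : ℕ) : ℕ := if d = 1 ∨ d = p - 2 then 1 else 0

section endpointSolution

variable {p : ℕ}

theorem sum_mul_endpointSolution (hp : 4 ≤ p) (f : ℕ → ℕ) :
    ∑ d ∈ Icc 1 (p - 2), f d * endpointSolution p d = f 1 + f (p - 2) := by
  have hfilter : {d ∈ Icc 1 (p - 2) | d = 1 ∨ d = p - 2} = {1, p - 2} := by
    ext d
    simp only [mem_filter, mem_Icc, mem_insert, mem_singleton]
    omega
  simp only [endpointSolution, mul_ite, mul_one, mul_zero]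
  rw [← sum_filter, hfilter, sum_pair (by omega)]

theorem isModSolution_endpointSolution (hp : 4 ≤ p) :
    IsModSolution p (Icc 1 (p - 2)) 1 (endpointSolution p) := by
  have hsum : ∑ d ∈ Icc 1 (p - 2), d * endpointSolution p d = p - 1 := by
    rw [sum_mul_endpointSolution hp fun d => d]
    omega
  refine ⟨fun d hd => ?_, fun d => ?_, ?_, ?_⟩
  · rw [mem_Icc] at hd
    simp only [endpointSolution]
    split_ifs <;> omega
  · simp only [endpointSolution, pow_one]
    split_ifs <;> omega
  · rw [hsum, pow_one]
  · rw [hsum]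
    omega

theorem solWeight_endpointSolution (hp : 4 ≤ p) :
    solWeight p (Icc 1 (p - 2)) (endpointSolution p) = 2 := by
  have hdigits : ∀ d, (Nat.digits p (endpointSolution p d)).sum = 1 * endpointSolution p d := by
    intro d
    simp only [endpointSolution]
    split_ifs
    · simp [Nat.digits_of_lt p 1 one_ne_zero (by omega)]
    · simp
  simp only [solWeight, hdigits, sum_mul_endpointSolution hp]

end endpointSolution

theorem stmt_12_general (p : ℕ) (hp5 : 5 ≤ p) :
    (∀ u : ℕ → ℕ, (∀ d, d ∉ Finset.Icc 1 (p - 2) → u d = 0) →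
      (p - 1) ∣ ∑ d ∈ Finset.Icc 1 (p - 2), d * u d →
      0 < ∑ d ∈ Finset.Icc 1 (p - 2), d * u d →
      2 ≤ solWeight p (Finset.Icc 1 (p - 2)) u) ∧
    IsLeast (densitySet p (Finset.Icc 1 (p - 2))) (2 / ((p : ℝ) - 1)) := by
  have hD : ∀ d ∈ Finset.Icc 1 (p - 2), d ≤ p - 2 := fun d hd => (mem_Icc.mp hd).2
  have hp1 : (0 : ℝ) < p - 1 := by
    have : (5 : ℝ) ≤ p := by exact_mod_cast hp5
    linarith
  refine ⟨fun u _ hdvd hpos => two_le_solWeight_of_dvd (by omega) hD hdvd hpos, ?_, ?_⟩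
  · refine ⟨1, endpointSolution p, one_pos, isModSolution_endpointSolution (by omega), ?_⟩
    rw [solWeight_endpointSolution (by omega)]
    norm_num
  · rintro x ⟨ℓ, u, hℓ, hu, rfl⟩
    have hweight : (2 * ℓ : ℝ) ≤ solWeight p (Finset.Icc 1 (p - 2)) u := by
      exact_mod_cast two_mul_le_solWeight (by omega) hD hℓ hu
    rw [div_le_div_iff₀ hp1 (by positivity)]
    nlinarith

/-- For a prime `p ≥ 5` and `D = {1,…,p−2}`: every solution of
`∑ d·u_d ≡ 0 (mod p−1)`, `∑ d·u_d > 0` has `p`-weight at least `2`, and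
consequently the `p`-density of `D` equals `2/(p−1)` (as a minimum). -/
theorem stmt_12 (p : ℕ) (hp : p.Prime) (hp5 : 5 ≤ p) :
    (∀ u : ℕ → ℕ, (∀ d, d ∉ Finset.Icc 1 (p - 2) → u d = 0) →
      (p - 1) ∣ ∑ d ∈ Finset.Icc 1 (p - 2), d * u d →
      0 < ∑ d ∈ Finset.Icc 1 (p - 2), d * u d →
      2 ≤ solWeight p (Finset.Icc 1 (p - 2)) u) ∧
    IsLeast (densitySet p (Finset.Icc 1 (p - 2))) (2 / ((p : ℝ) - 1)) :=
  stmt_12_general p hp5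
end digitRotation
end

section
/- Let p be an odd prime and n ≥ 2. The p-density of the set D = { i : 1 ≤ i ≤ p^{n+1} − p − 1, gcd(i,p) = 1 } equals 1/(n(p−1)). -/
/-!
The witness `u (p ^ n - 1) = 1` of length `n` has density `1 / (n (p - 1))`. For the lower bound,
a solution of length `ℓ` and weight `V` is a multiset of `V` terms `d p ^ j` (`d ∈ D`, one per unit
of a digit) whose sum is a positive multiple of `M = p ^ ℓ - 1`; we show `ℓ ≤ n V`.

Multiplying by `p ^ t` and reducing every term modulo `M` gives sums `Y t`, again positive
multiples of `M`. If `Y t ≥ 2 M` for every `t < ℓ`, averaging over `t` (each term contributes at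
most `(n + 2) M` in total) gives `2 ℓ ≤ (n + 2) V ≤ 2 n V`. Otherwise some `Y t = M`: the reduced
terms are `lo * p ^ b` plus wrapped-around parts summing to a small `H`, and
`p ^ ℓ = (H + 1) + ∑ lo * p ^ b`. Adding the terms to `H + 1` in increasing order of `b`, each
lengthens the base-`p` expansion by at most `n` digits because `d ≤ p ^ (n + 1) - p - 1`, so
`ℓ ≤ n V + log_p (H + 1)`. Running this on `K` shifted copies of the solution (length `K ℓ`,
`K V` terms) makes the logarithmic error negligible.
-/

theorem Function.Periodic.sum_range_add {M : Type*} [AddCancelCommMonoid M] {f : ℕ → M} {L : ℕ}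
    (hf : Function.Periodic f L) (j : ℕ) :
    ∑ t ∈ Finset.range L, f (j + t) = ∑ t ∈ Finset.range L, f t := by
  induction j with
  | zero => simp
  | succ j ih =>
    have h := (Finset.sum_range_succ' (fun t => f (j + t)) L).symm.trans
      (Finset.sum_range_succ (fun t => f (j + t)) L)
    rw [add_zero, hf j] at h
    rw [← ih, ← add_right_cancel h]
    simp only [add_assoc, add_comm 1]

namespace PDensity

-- A pair `(d, j)` stands for the term `d * p ^ j`.
def termSum (p : ℕ) (U : Multiset (ℕ × ℕ)) : ℕ :=
  (U.map fun x => x.1 * p ^ x.2).sum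

section TermSum

variable {p : ℕ}

@[simp] lemma termSum_zero : termSum p 0 = 0 := rfl

@[simp] lemma termSum_cons (x : ℕ × ℕ) (U : Multiset (ℕ × ℕ)) :
    termSum p (x ::ₘ U) = x.1 * p ^ x.2 + termSum p U := by
  simp [termSum]

@[simp] lemma termSum_add (U V : Multiset (ℕ × ℕ)) :
    termSum p (U + V) = termSum p U + termSum p V := by
  simp [termSum]

lemma termSum_map_shift (U : Multiset (ℕ × ℕ)) (k : ℕ) :
    termSum p (U.map fun x => (x.1, x.2 + k)) = p ^ k * termSum p U := by
  simp only [termSum, Multiset.map_map, Function.comp_def, pow_add, ← Multiset.sum_map_mul_left]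
  congr 1
  exact Multiset.map_congr rfl fun x _ => by ring

lemma termSum_bind {α : Type*} (s : Multiset α) (f : α → Multiset (ℕ × ℕ)) :
    termSum p (s.bind f) = (s.map fun a => termSum p (f a)).sum := by
  simp only [termSum, Multiset.map_bind, Multiset.sum_bind]

end TermSum

-- This is where the bound `p ^ (n + 1) - p - 1` on `D` enters: adding a term of `n + 1` digits
-- to a positive number lengthens it by at most `n` digits.
lemma add_lt_pow_add {p n a d f : ℕ} (hp : 1 < p) (ha : 0 < a) (haf : a < p ^ f)
    (hd : d + p ≤ p ^ (n + 1)) : a + d < p ^ (f + n) := by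
  have hf : 0 < f := Nat.pos_of_ne_zero (by rintro rfl; simp at haf; omega)
  rcases lt_or_ge a p with hap | hpa
  · have : p ^ (n + 1) ≤ p ^ (f + n) := Nat.pow_le_pow_right (by omega) (by omega)
    omega
  rcases Nat.eq_zero_or_pos n with rfl | hn
  · simp at hd ⊢; omega
  have hf2 : 1 < f := (Nat.pow_lt_pow_iff_right hp).mp (by simpa using lt_of_le_of_lt hpa haf)
  have h1 : p ^ f ≤ p ^ (f + n - 1) := Nat.pow_le_pow_right (by omega) (by omega)
  have h2 : p ^ (n + 1) ≤ p ^ (f + n - 1) := Nat.pow_le_pow_right (by omega) (by omega)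
  have h3 : p ^ (f + n) = p ^ (f + n - 1) * p := by
    rw [← pow_succ]; congr 1; omega
  have h4 : p ^ (f + n - 1) * 2 ≤ p ^ (f + n - 1) * p := Nat.mul_le_mul_left _ hp
  omega

lemma pow_dvd_of_add_termSum_eq {p c L : ℕ} {U : Multiset (ℕ × ℕ)} {x : ℕ × ℕ} (hp : 1 < p)
    (hx : x ∈ U) (hx1 : 0 < x.1) (hmin : ∀ y ∈ U, x.2 ≤ y.2) (h : c + termSum p U = p ^ L) :
    p ^ x.2 ∣ c := by
  have hU : p ^ x.2 ∣ termSum p U := Multiset.dvd_sum fun y hy => by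
    obtain ⟨z, hz, rfl⟩ := Multiset.mem_map.mp hy
    exact (pow_dvd_pow p (hmin z hz)).mul_left _
  have hxL : x.2 ≤ L := by
    refine (Nat.pow_le_pow_iff_right hp).mp ?_
    have h1 := Nat.le_mul_of_pos_left (p ^ x.2) hx1
    have h2 : x.1 * p ^ x.2 ≤ termSum p U :=
      Multiset.le_sum_of_mem (Multiset.mem_map_of_mem (fun y => y.1 * p ^ y.2) hx)
    omega
  exact (Nat.dvd_add_left hU).mp (h ▸ pow_dvd_pow p hxL)

theorem lt_add_mul_card_of_add_termSum_eq {p n : ℕ} (hp : 1 < p) (U : Multiset (ℕ × ℕ))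
    (hU : ∀ x ∈ U, 0 < x.1 ∧ x.1 + p ≤ p ^ (n + 1)) {c e L : ℕ} (hc : 0 < c) (hce : c < p ^ e)
    (h : c + termSum p U = p ^ L) : L < e + n * Multiset.card U := by
  induction hk : Multiset.card U generalizing U c e with
  | zero =>
    rw [Multiset.card_eq_zero.mp hk, termSum_zero, add_zero] at h
    rw [h] at hce
    simpa using (Nat.pow_lt_pow_iff_right hp).mp hce
  | succ k ih =>
    have hne : U.toFinset.Nonempty := by
      simpa [Multiset.toFinset_nonempty, ← Multiset.card_pos] using hk ▸ k.succ_pos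
    obtain ⟨x, hxU, hmin⟩ := U.toFinset.exists_min_image Prod.snd hne
    rw [Multiset.mem_toFinset] at hxU
    obtain ⟨a, rfl⟩ := pow_dvd_of_add_termSum_eq hp hxU (hU x hxU).1
      (fun y hy => hmin y (Multiset.mem_toFinset.mpr hy)) h
    rw [← Multiset.cons_erase hxU, termSum_cons] at h
    have ha : 0 < a := Nat.pos_of_mul_pos_left hc
    have hxe : x.2 ≤ e :=
      (Nat.pow_le_pow_iff_right hp).mp ((Nat.le_mul_of_pos_right _ ha).trans hce.le)
    have hae : a < p ^ (e - x.2) := by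
      rwa [← Nat.mul_lt_mul_left (pow_pos (by omega : 0 < p) x.2), ← pow_add,
        Nat.add_sub_cancel' hxe]
    have hlt : p ^ x.2 * (a + x.1) < p ^ (e + n) :=
      calc p ^ x.2 * (a + x.1) < p ^ x.2 * p ^ (e - x.2 + n) :=
            Nat.mul_lt_mul_of_pos_left (add_lt_pow_add hp ha hae (hU x hxU).2) (by positivity)
        _ = p ^ (e + n) := by rw [← pow_add]; congr 1; omega
    have := ih (U.erase x) (fun y hy => hU y (Multiset.mem_of_mem_erase hy)) (by positivity) hlt
      (by rw [← h]; ring) (by rw [Multiset.card_erase_of_mem hxU, hk]; rfl)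
    rw [mul_add_one]
    omega

section Residues

variable {p n L d : ℕ}

lemma pow_modEq_pow_mod (hp : 0 < p) (s : ℕ) : p ^ s ≡ p ^ (s % L) [MOD p ^ L - 1] := by
  have h : p ^ L ≡ 1 [MOD p ^ L - 1] := Nat.modEq_sub (Nat.one_le_pow _ _ hp)
  calc p ^ s = (p ^ L) ^ (s / L) * p ^ (s % L) := by
        rw [← pow_mul, ← pow_add, Nat.div_add_mod]
    _ ≡ 1 ^ (s / L) * p ^ (s % L) [MOD p ^ L - 1] := (h.pow _).mul_right _
    _ = p ^ (s % L) := by rw [one_pow, one_mul]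

-- As `p ^ L ≡ 1`, the digits of `d * p ^ b` from position `L` on wrap around to the bottom.
lemma mul_pow_modEq_mod_mul_pow_add_div (hp : 0 < p) {b : ℕ} (hb : b ≤ L) :
    d * p ^ b ≡ d % p ^ (L - b) * p ^ b + d / p ^ (L - b) [MOD p ^ L - 1] := by
  have h : p ^ L ≡ 1 [MOD p ^ L - 1] := Nat.modEq_sub (Nat.one_le_pow _ _ hp)
  have hsplit : d * p ^ b = d % p ^ (L - b) * p ^ b + d / p ^ (L - b) * p ^ L := by
    conv_lhs => rw [← Nat.mod_add_div d (p ^ (L - b))]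
    rw [← Nat.sub_add_cancel hb, pow_add, Nat.add_sub_cancel]
    ring
  calc d * p ^ b = d % p ^ (L - b) * p ^ b + d / p ^ (L - b) * p ^ L := hsplit
    _ ≡ d % p ^ (L - b) * p ^ b + d / p ^ (L - b) * 1 [MOD p ^ L - 1] :=
        Nat.ModEq.add_left _ (h.mul_left _)
    _ = _ := by rw [mul_one]

lemma mul_pow_lt_pow_sub_one (hp : 0 < p) (hd : d + 2 ≤ p ^ (n + 1)) {s : ℕ}
    (hs : s + n + 1 ≤ L) : d * p ^ s < p ^ L - 1 := by
  have h1 : (d + 2) * p ^ s ≤ p ^ L :=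
    calc (d + 2) * p ^ s ≤ p ^ (n + 1) * p ^ s := Nat.mul_le_mul_right _ hd
      _ = p ^ (n + 1 + s) := (pow_add _ _ _).symm
      _ ≤ p ^ L := Nat.pow_le_pow_right hp (by omega)
  have h2 : 1 ≤ p ^ s := Nat.one_le_pow _ _ hp
  have h3 : d * p ^ s + 2 ≤ p ^ L := by nlinarith
  omega

lemma mod_mul_pow_add_div_lt (hp : 1 < p) (hL : n + 2 ≤ L) (hd : d + 2 ≤ p ^ (n + 1)) {b : ℕ}
    (hb : b < L) : d % p ^ (L - b) * p ^ b + d / p ^ (L - b) < p ^ L - 1 := by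
  rcases le_or_gt (n + 1) (L - b) with hwide | hnarrow
  · have hdq : d < p ^ (L - b) :=
      lt_of_lt_of_le (by omega) (Nat.pow_le_pow_right (by omega) hwide)
    rw [Nat.mod_eq_of_lt hdq, Nat.div_eq_of_lt hdq, add_zero]
    exact mul_pow_lt_pow_sub_one (by omega) hd (by omega)
  · have hq : p ^ (L - b) * p ^ b = p ^ L := by rw [← pow_add]; congr 1; omega
    have hlo : d % p ^ (L - b) + 1 ≤ p ^ (L - b) := Nat.mod_lt _ (by positivity)
    have hhi : d / p ^ (L - b) < p ^ (b - 1) := by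
      rw [Nat.div_lt_iff_lt_mul (by positivity), ← pow_add]
      exact lt_of_lt_of_le (show d < p ^ (n + 1) by omega)
        (Nat.pow_le_pow_right (by omega) (by omega))
    have hb1 : p ^ (b - 1) * p = p ^ b := by rw [← pow_succ]; congr 1; omega
    have h1 : (d % p ^ (L - b) + 1) * p ^ b ≤ p ^ L := hq ▸ Nat.mul_le_mul_right _ hlo
    have h2 : p ^ (b - 1) * 2 ≤ p ^ b := hb1 ▸ Nat.mul_le_mul_left _ hp
    have h3 : 1 ≤ p ^ (b - 1) := Nat.one_le_pow _ _ (by omega)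
    rw [add_one_mul] at h1
    omega

lemma mul_pow_mod_pow_sub_one (hp : 1 < p) (hL : n + 2 ≤ L) (hd : d + 2 ≤ p ^ (n + 1))
    (s : ℕ) : d * p ^ s % (p ^ L - 1)
      = d % p ^ (L - s % L) * p ^ (s % L) + d / p ^ (L - s % L) := by
  have hsL : s % L < L := Nat.mod_lt _ (by omega)
  have h := ((pow_modEq_pow_mod (L := L) (by omega) s).mul_left d).trans
    (mul_pow_modEq_mod_mul_pow_add_div (p := p) (d := d) (by omega) hsL.le)
  rw [h, Nat.mod_eq_of_lt (mod_mul_pow_add_div_lt hp hL hd hsL)]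

end Residues

-- Modulo `p ^ L - 1`, multiplying by `p` rotates the `L` base-`p` digits; here every term of
-- `p ^ t * termSum p U` is reduced separately.
def residueSum (p L t : ℕ) (U : Multiset (ℕ × ℕ)) : ℕ :=
  (U.map fun x => x.1 * p ^ (x.2 + t) % (p ^ L - 1)).sum

section ResidueSum

variable {p n L : ℕ} {U : Multiset (ℕ × ℕ)}

lemma dvd_residueSum (hdvd : p ^ L - 1 ∣ termSum p U) (t : ℕ) :
    p ^ L - 1 ∣ residueSum p L t U := by
  have h : (U.map fun x => x.1 * p ^ (x.2 + t)).sum = p ^ t * termSum p U := by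
    rw [termSum, ← Multiset.sum_map_mul_left]
    exact congrArg _ (Multiset.map_congr rfl fun x _ => by ring)
  have hmod := Multiset.sum_nat_mod (U.map fun x => x.1 * p ^ (x.2 + t)) (p ^ L - 1)
  rw [Multiset.map_map, h, Function.comp_def] at hmod
  rw [Nat.dvd_iff_mod_eq_zero, residueSum, ← hmod]
  exact Nat.mod_eq_zero_of_dvd (hdvd.mul_left _)

lemma mod_pow_pos {d k : ℕ} (hpd : ¬ p ∣ d) (hk : 0 < k) : 0 < d % p ^ k :=
  Nat.pos_of_ne_zero fun h => hpd ((dvd_pow_self p hk.ne').trans (Nat.dvd_of_mod_eq_zero h))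

lemma pow_sub_one_le_residueSum (hp : 1 < p) (hL : n + 2 ≤ L)
    (hU : ∀ x ∈ U, ¬ p ∣ x.1 ∧ x.1 + p ≤ p ^ (n + 1)) (hU0 : U ≠ 0)
    (hdvd : p ^ L - 1 ∣ termSum p U) (t : ℕ) : p ^ L - 1 ≤ residueSum p L t U := by
  refine Nat.le_of_dvd ?_ (dvd_residueSum hdvd t)
  obtain ⟨x, hx⟩ := Multiset.exists_mem_of_ne_zero hU0
  refine lt_of_lt_of_le ?_ (Multiset.le_sum_of_mem (Multiset.mem_map_of_mem _ hx))
  rw [mul_pow_mod_pow_sub_one hp hL (by have := (hU x hx).2; omega)]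
  have := mod_pow_pos (hU x hx).1 (show 0 < L - (x.2 + t) % L from
    Nat.sub_pos_of_lt (Nat.mod_lt _ (by omega)))
  positivity

lemma mul_geom_sum_le (hp : 3 ≤ p) {d k : ℕ} (hd : d + p ≤ p ^ (n + 1)) (hk : 2 ≤ k + n) :
    d * ∑ s ∈ Finset.range k, p ^ s ≤ 2 * (p ^ (k + n) - 1) := by
  set M := p ^ (k + n) - 1 with hM
  have hM1 : p ^ 2 ≤ M + 1 := by
    have := Nat.pow_le_pow_right (show 0 < p by omega) hk
    omega
  set G := ∑ s ∈ Finset.range k, p ^ s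
  have hG : d * G * (p - 1) + d = d * p ^ k := by
    have := geom_sum_mul_add (p - 1) k
    rw [Nat.sub_add_cancel (by omega)] at this
    rw [← this]; ring
  have hdp : (d + p) * p ^ k ≤ p * (M + 1) :=
    calc (d + p) * p ^ k ≤ p ^ (n + 1) * p ^ k := Nat.mul_le_mul_right _ hd
      _ = p * p ^ (k + n) := by ring
      _ = p * (M + 1) := by rw [hM, Nat.sub_add_cancel (Nat.one_le_pow _ _ (by omega))]
  have hpk : 1 ≤ p ^ k := Nat.one_le_pow _ _ (by omega)
  have hp1 : 2 ≤ p - 1 := by omega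
  have hmain : d * G * (p - 1) ≤ 2 * M * (p - 1) := by
    have : p = (p - 1) + 1 := by omega
    nlinarith
  exact Nat.le_of_mul_le_mul_right hmain (by omega)

lemma sum_range_mul_pow_mod_le (hp : 3 ≤ p) (hL : n + 2 ≤ L) {d : ℕ} (hd : d + p ≤ p ^ (n + 1))
    (j : ℕ) : ∑ t ∈ Finset.range L, d * p ^ (j + t) % (p ^ L - 1) ≤ (n + 2) * (p ^ L - 1) := by
  set M := p ^ L - 1 with hM
  have hMpos : 0 < M := by
    have := Nat.le_self_pow (show L ≠ 0 by omega) p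
    omega
  have hper : Function.Periodic (fun s => d * p ^ s % M) L := fun s => by
    have h : p ^ L ≡ 1 [MOD M] := Nat.modEq_sub (Nat.one_le_pow _ _ (by omega))
    have := h.mul_left (d * p ^ s)
    rwa [mul_one, mul_assoc, ← pow_add] at this
  rw [hper.sum_range_add j]
  obtain ⟨k, rfl⟩ : ∃ k, L = k + n := ⟨L - n, by omega⟩
  rw [Finset.sum_range_add]
  -- The first `k` terms do not wrap around; the last `n` are each below `M`.
  have hlow : ∑ s ∈ Finset.range k, d * p ^ s % M ≤ 2 * M := by
    rw [Finset.sum_congr rfl fun s hs => Nat.mod_eq_of_lt (mul_pow_lt_pow_sub_one (n := n)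
      (by omega) (by omega) (show s + n + 1 ≤ k + n by simp at hs; omega)), ← Finset.mul_sum]
    exact mul_geom_sum_le hp hd (by omega)
  have hhigh : ∑ s ∈ Finset.range n, d * p ^ (k + s) % M ≤ n * M := by
    simpa using Finset.sum_le_card_nsmul (Finset.range n) _ M fun s _ => (Nat.mod_lt _ hMpos).le
  calc _ ≤ 2 * M + n * M := add_le_add hlow hhigh
    _ = (n + 2) * M := by ring

lemma le_mul_card_of_two_mul_le_residueSum (hp : 3 ≤ p) (hn : 2 ≤ n) (hL : n + 2 ≤ L)
    (hU : ∀ x ∈ U, x.1 + p ≤ p ^ (n + 1))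
    (h : ∀ t < L, 2 * (p ^ L - 1) ≤ residueSum p L t U) : L ≤ n * Multiset.card U := by
  set M := p ^ L - 1 with hM
  have hMpos : 0 < M := by
    have := Nat.le_self_pow (show L ≠ 0 by omega) p
    omega
  have hmass : L * (2 * M) ≤ Multiset.card U * ((n + 2) * M) :=
    calc L * (2 * M) = ∑ _t ∈ Finset.range L, 2 * M := by simp
      _ ≤ ∑ t ∈ Finset.range L, residueSum p L t U :=
          Finset.sum_le_sum fun t ht => h t (Finset.mem_range.mp ht)
      _ = (U.map fun x => ∑ t ∈ Finset.range L, x.1 * p ^ (x.2 + t) % M).sum := by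
          simp only [residueSum, Finset.sum_eq_multiset_sum]
          exact Multiset.sum_map_sum_map _ _
      _ ≤ Multiset.card U * ((n + 2) * M) := by
          refine (Multiset.sum_le_card_nsmul _ _ fun y hy => ?_).trans_eq
            (by rw [Multiset.card_map, smul_eq_mul])
          obtain ⟨x, hx, rfl⟩ := Multiset.mem_map.mp hy
          exact sum_range_mul_pow_mod_le hp hL (hU x hx) x.2
  have : 2 * L ≤ (n + 2) * Multiset.card U := Nat.le_of_mul_le_mul_right (by nlinarith) hMpos
  nlinarith

lemma lt_add_mul_card_of_residueSum_eq (hp : 1 < p) (hL : n + 2 ≤ L)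
    (hU : ∀ x ∈ U, ¬ p ∣ x.1 ∧ x.1 + p ≤ p ^ (n + 1)) (hU0 : U ≠ 0) {t e : ℕ}
    (ht : residueSum p L t U = p ^ L - 1) (he : Multiset.card U * p ^ (n + 1) ≤ p ^ e) :
    L < e + n * Multiset.card U := by
  set w : ℕ × ℕ → ℕ := fun x => L - (x.2 + t) % L
  set F := U.map fun x => (x.1 % p ^ w x, (x.2 + t) % L)
  set H := (U.map fun x => x.1 / p ^ w x).sum
  have hsplit : residueSum p L t U = termSum p F + H := by
    rw [residueSum, termSum, Multiset.map_map, ← Multiset.sum_map_add]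
    exact congrArg _ (Multiset.map_congr rfl fun x hx =>
      mul_pow_mod_pow_sub_one hp hL (by have := (hU x hx).2; omega) _)
  have hF : ∀ y ∈ F, 0 < y.1 ∧ y.1 + p ≤ p ^ (n + 1) := by
    intro y hy
    obtain ⟨x, hx, rfl⟩ := Multiset.mem_map.mp hy
    refine ⟨mod_pow_pos (hU x hx).1 (Nat.sub_pos_of_lt (Nat.mod_lt _ (by omega))), ?_⟩
    exact le_trans (Nat.add_le_add_right (Nat.mod_le _ _) _) (hU x hx).2
  have hH : H + 1 < p ^ e := by
    have h1 : H ≤ Multiset.card U * (p ^ (n + 1) - p) := by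
      refine (Multiset.sum_le_card_nsmul _ _ fun y hy => ?_).trans_eq
        (by rw [Multiset.card_map, smul_eq_mul])
      obtain ⟨x, hx, rfl⟩ := Multiset.mem_map.mp hy
      exact (Nat.div_le_self _ _).trans (by have := (hU x hx).2; omega)
    have h2 : 0 < Multiset.card U := Multiset.card_pos.mpr hU0
    have h3 : p ≤ p ^ (n + 1) := Nat.le_self_pow (by omega) p
    have h4 : Multiset.card U * (p ^ (n + 1) - p) + Multiset.card U * p
        = Multiset.card U * p ^ (n + 1) := by rw [← mul_add, Nat.sub_add_cancel h3]
    nlinarith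
  have h1 : 1 ≤ p ^ L := Nat.one_le_pow _ _ (by omega)
  simpa [F] using lt_add_mul_card_of_add_termSum_eq hp F hF (c := H + 1) (by omega) hH (by omega)

theorem le_add_mul_card_of_dvd (hp : 3 ≤ p) (hn : 2 ≤ n) (hL : n + 2 ≤ L)
    (hU : ∀ x ∈ U, ¬ p ∣ x.1 ∧ x.1 + p ≤ p ^ (n + 1)) (hU0 : U ≠ 0)
    (hdvd : p ^ L - 1 ∣ termSum p U) {e : ℕ} (he : Multiset.card U * p ^ (n + 1) ≤ p ^ e) :
    L ≤ e + n * Multiset.card U := by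
  by_cases hmass : ∀ t < L, 2 * (p ^ L - 1) ≤ residueSum p L t U
  · exact (le_mul_card_of_two_mul_le_residueSum hp hn hL (fun x hx => (hU x hx).2) hmass).trans
      (Nat.le_add_left _ _)
  obtain ⟨t, -, ht⟩ : ∃ t < L, residueSum p L t U < 2 * (p ^ L - 1) := by simpa using hmass
  have hexact : residueSum p L t U = p ^ L - 1 := by
    obtain ⟨k, hk⟩ := dvd_residueSum hdvd t
    have hle := pow_sub_one_le_residueSum (by omega) hL hU hU0 hdvd t
    rw [hk] at hle ht ⊢
    have hM : 0 < p ^ L - 1 := by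
      have := Nat.le_self_pow (show L ≠ 0 by omega) p
      omega
    have h1 : 1 ≤ k := Nat.le_of_mul_le_mul_left (by rwa [mul_one]) hM
    have h2 : k < 2 := Nat.lt_of_mul_lt_mul_left (by rwa [mul_comm 2] at ht)
    rw [show k = 1 by omega, mul_one]
  exact (lt_add_mul_card_of_residueSum_eq (by omega) hL hU hU0 hexact he).le

end ResidueSum

def shiftCopies (ℓ K : ℕ) (U : Multiset (ℕ × ℕ)) : Multiset (ℕ × ℕ) :=
  (Multiset.range K).bind fun k => U.map fun x => (x.1, x.2 + k * ℓ)

section ShiftCopies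

variable {p ℓ K : ℕ} {U : Multiset (ℕ × ℕ)}

lemma card_shiftCopies : Multiset.card (shiftCopies ℓ K U) = K * Multiset.card U := by
  simp [shiftCopies, Multiset.card_bind]

lemma exists_fst_eq_of_mem_shiftCopies {x : ℕ × ℕ} (hx : x ∈ shiftCopies ℓ K U) :
    ∃ y ∈ U, y.1 = x.1 := by
  obtain ⟨k, -, hx⟩ := Multiset.mem_bind.mp hx
  obtain ⟨y, hy, rfl⟩ := Multiset.mem_map.mp hx
  exact ⟨y, hy, rfl⟩

lemma pow_sub_one_dvd_termSum_shiftCopies (hp : 0 < p) (hdvd : p ^ ℓ - 1 ∣ termSum p U) :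
    p ^ (K * ℓ) - 1 ∣ termSum p (shiftCopies ℓ K U) := by
  have hgeom := geom_sum_mul_add (p ^ ℓ - 1) K
  rw [Nat.sub_add_cancel (Nat.one_le_pow _ _ hp)] at hgeom
  have hsum : termSum p (shiftCopies ℓ K U)
      = (∑ k ∈ Finset.range K, (p ^ ℓ) ^ k) * termSum p U := by
    simp only [shiftCopies, termSum_bind, termSum_map_shift, Multiset.sum_map_mul_right,
      mul_comm _ ℓ, pow_mul]
    rfl
  rw [hsum, mul_comm K ℓ, pow_mul, ← hgeom, Nat.add_sub_cancel]
  exact mul_dvd_mul_left _ hdvd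

end ShiftCopies

theorem le_mul_card_of_dvd {p n ℓ : ℕ} {U : Multiset (ℕ × ℕ)} (hp : 3 ≤ p) (hn : 2 ≤ n)
    (hℓ : 0 < ℓ) (hU : ∀ x ∈ U, ¬ p ∣ x.1 ∧ x.1 + p ≤ p ^ (n + 1)) (hU0 : U ≠ 0)
    (hdvd : p ^ ℓ - 1 ∣ termSum p U) : ℓ ≤ n * Multiset.card U := by
  -- `c` is chosen so that the error term `e = c + V + n + 1 = 2 c` stays below `K = p ^ c`.
  set V := Multiset.card U with hVdef
  set c := V + n + 1
  set K := p ^ c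
  have hK : 2 * c < K := by
    have h3 := one_add_le_pow_of_two_add_nonneg (show (0 : ℕ) ≤ 2 + 2 by omega) c
    have h4 : 3 ^ c ≤ p ^ c := Nat.pow_le_pow_left hp c
    norm_num at h3
    omega
  have hV : V < p ^ V := Nat.lt_pow_self (by omega)
  have he : Multiset.card (shiftCopies ℓ K U) * p ^ (n + 1) ≤ p ^ (c + V + (n + 1)) :=
    calc Multiset.card (shiftCopies ℓ K U) * p ^ (n + 1) = K * V * p ^ (n + 1) := by
          rw [card_shiftCopies]
      _ ≤ K * p ^ V * p ^ (n + 1) := by gcongr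
      _ = p ^ (c + V + (n + 1)) := by simp only [K, ← pow_add]
  have hUK : ∀ x ∈ shiftCopies ℓ K U, ¬ p ∣ x.1 ∧ x.1 + p ≤ p ^ (n + 1) := fun x hx => by
    obtain ⟨y, hy, hyx⟩ := exists_fst_eq_of_mem_shiftCopies hx
    exact hyx ▸ hU y hy
  have hUK0 : shiftCopies ℓ K U ≠ 0 := by
    rw [← Multiset.card_pos, card_shiftCopies]
    exact Nat.mul_pos (by positivity) (Multiset.card_pos.mpr hU0)
  have hbound := le_add_mul_card_of_dvd hp hn (L := K * ℓ)
    (le_trans (by omega) (Nat.le_mul_of_pos_right K hℓ)) hUK hUK0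
    (pow_sub_one_dvd_termSum_shiftCopies (by omega) hdvd) he
  rw [card_shiftCopies, ← hVdef] at hbound
  have : K * ℓ < K * (n * V + 1) :=
    calc K * ℓ ≤ 2 * c + n * (K * V) := by omega
      _ < K + n * (K * V) := by omega
      _ = K * (n * V + 1) := by ring
  exact Nat.lt_succ_iff.mp (Nat.lt_of_mul_lt_mul_left this)

-- The `j`-th digit `c` of `u d` contributes `c` copies of the term `(d, j)`, so that the terms
-- of a solution sum to `∑ d * u d` and their number is its weight.
def digitTerms (d : ℕ) : List ℕ → ℕ → Multiset (ℕ × ℕ)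
  | [], _ => 0
  | c :: l, j => Multiset.replicate c (d, j) + digitTerms d l (j + 1)

def solutionTerms (p : ℕ) (D : Finset ℕ) (u : ℕ → ℕ) : Multiset (ℕ × ℕ) :=
  D.val.bind fun d => digitTerms d (Nat.digits p (u d)) 0

section SolutionTerms

variable {p : ℕ}

lemma card_digitTerms (d : ℕ) : ∀ (l : List ℕ) (j : ℕ), Multiset.card (digitTerms d l j) = l.sum
  | [], _ => rfl
  | c :: l, j => by simp [digitTerms, card_digitTerms d l]

lemma termSum_digitTerms (d : ℕ) :
    ∀ (l : List ℕ) (j : ℕ), termSum p (digitTerms d l j) = d * Nat.ofDigits p l * p ^ j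
  | [], _ => by simp [digitTerms]
  | c :: l, j => by
    rw [digitTerms, termSum_add, termSum_digitTerms d l, termSum, Multiset.map_replicate,
      Multiset.sum_replicate, Nat.ofDigits_cons, smul_eq_mul, pow_succ]
    ring

lemma fst_eq_of_mem_digitTerms {d : ℕ} :
    ∀ {l : List ℕ} {j : ℕ} {x : ℕ × ℕ}, x ∈ digitTerms d l j → x.1 = d
  | [], _, _, hx => by simp [digitTerms] at hx
  | c :: l, j, x, hx => by
    rcases Multiset.mem_add.mp hx with hx | hx
    · rw [Multiset.eq_of_mem_replicate hx]
    · exact fst_eq_of_mem_digitTerms hx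

lemma card_solutionTerms (D : Finset ℕ) (u : ℕ → ℕ) :
    Multiset.card (solutionTerms p D u) = solWeight p D u := by
  rw [solutionTerms, Multiset.card_bind]
  simp only [Function.comp_def, card_digitTerms]
  rfl

lemma termSum_solutionTerms (D : Finset ℕ) (u : ℕ → ℕ) :
    termSum p (solutionTerms p D u) = ∑ d ∈ D, d * u d := by
  rw [solutionTerms, termSum_bind]
  simp only [termSum_digitTerms, Nat.ofDigits_digits, pow_zero, mul_one]
  rfl

end SolutionTerms

theorem le_mul_solWeight {p n ℓ : ℕ} {D : Finset ℕ} {u : ℕ → ℕ} (hp : 3 ≤ p) (hn : 2 ≤ n)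
    (hD : ∀ d ∈ D, ¬ p ∣ d ∧ d + p ≤ p ^ (n + 1)) (hℓ : 0 < ℓ) (hsol : IsModSolution p D ℓ u) :
    ℓ ≤ n * solWeight p D u := by
  obtain ⟨-, -, hdvd, hpos⟩ := hsol
  rw [← termSum_solutionTerms (p := p)] at hdvd hpos
  rw [← card_solutionTerms]
  refine le_mul_card_of_dvd hp hn hℓ (fun x hx => ?_) (fun h => by simp [h] at hpos) hdvd
  obtain ⟨d, hd, hx⟩ := Multiset.mem_bind.mp hx
  exact fst_eq_of_mem_digitTerms hx ▸ hD d hd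

lemma one_div_le_of_mem_densitySet {p n : ℕ} {D : Finset ℕ} (hp : 1 < p) (hn : 0 < n)
    (h : ∀ ℓ u, 0 < ℓ → IsModSolution p D ℓ u → ℓ ≤ n * solWeight p D u) {x : ℝ}
    (hx : x ∈ densitySet p D) : 1 / ((n : ℝ) * (p - 1)) ≤ x := by
  obtain ⟨ℓ, u, hℓ, hsol, rfl⟩ := hx
  have hle : (ℓ : ℝ) ≤ n * solWeight p D u := by exact_mod_cast h ℓ u hℓ hsol
  have hp' : (0 : ℝ) < p - 1 := by
    have : (1 : ℝ) < p := by exact_mod_cast hp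
    linarith
  have hℓ' : (0 : ℝ) < ℓ := by exact_mod_cast hℓ
  have hn' : (0 : ℝ) < n := by exact_mod_cast hn
  rw [div_le_div_iff₀ (by positivity) (by positivity)]
  nlinarith

lemma one_div_mem_densitySet {p n : ℕ} {D : Finset ℕ} (hp : 1 < p) (hn : 0 < n)
    (hD : p ^ n - 1 ∈ D) : 1 / ((n : ℝ) * (p - 1)) ∈ densitySet p D := by
  have h2 : 2 ≤ p ^ n := le_trans hp (Nat.le_self_pow hn.ne' p)
  have hsum : ∑ d ∈ D, d * (if d = p ^ n - 1 then 1 else 0) = p ^ n - 1 := by simp [hD]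
  refine ⟨n, fun d => if d = p ^ n - 1 then 1 else 0, hn, ⟨?_, ?_, ?_, ?_⟩, ?_⟩
  · intro d hd
    simp only [ite_eq_right_iff]
    rintro rfl
    exact absurd hD hd
  · intro d
    dsimp only
    split <;> omega
  · rw [hsum]
  · rw [hsum]; omega
  · simp [solWeight, apply_ite, hD, Nat.digits_of_lt p 1 one_ne_zero hp]

end PDensity

/-- Proposition `wgeom`: for an odd prime `p` and `n ≥ 2`, the `p`-density of
`D = { i : 1 ≤ i ≤ p^{n+1} − p − 1, gcd(i,p) = 1 }` equals `1/(n(p−1))`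
(attained as a minimum). -/
theorem stmt_15 (p n : ℕ) (hp : p.Prime) (hodd : Odd p) (hn : 2 ≤ n) :
    IsLeast (densitySet p ((Finset.Icc 1 (p ^ (n + 1) - p - 1)).filter
      (fun i => Nat.Coprime i p))) (1 / ((n : ℝ) * (p - 1))) := by
  have hp3 : 3 ≤ p := by
    obtain ⟨k, rfl⟩ := hodd
    have := hp.two_le
    omega
  have hpn : p ≤ p ^ n := Nat.le_self_pow (by omega) p
  have hpn1 : p ^ n + p ≤ p ^ (n + 1) := by rw [pow_succ]; nlinarith
  refine ⟨PDensity.one_div_mem_densitySet (by omega) (by omega) ?_,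
    fun x hx => PDensity.one_div_le_of_mem_densitySet (by omega) (by omega)
      (fun ℓ u hℓ hsol => PDensity.le_mul_solWeight hp3 hn ?_ hℓ hsol) hx⟩
  · have hcop : Nat.Coprime (p ^ n - 1) (p ^ n) :=
      (Nat.coprime_self_sub_left (show 1 ≤ p ^ n by omega)).mpr (Nat.coprime_one_left _)
    simp only [Finset.mem_filter, Finset.mem_Icc]
    exact ⟨⟨by omega, by omega⟩, hcop.coprime_dvd_right (dvd_pow_self p (by omega))⟩
  · intro d hd
    simp only [Finset.mem_filter, Finset.mem_Icc] at hd
    exact ⟨fun hpd => by have := hd.2.symm.eq_one_of_dvd hpd; omega, by omega⟩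
end

section
/- Let p be an odd prime. The p-density of the set D = { i : 1 ≤ i ≤ p² − p − 1, gcd(i,p) = 1 } equals 1/(p−1). -/
/-!
The density `1/(p-1)` is attained by `u_{p-1} = 1` with `ℓ = 1`; the point is that every solution
of length `ℓ` has weight at least `ℓ`. Expanding each `u_d` in base `p` gives
`N = ∑ d u_d = ∑_{j<ℓ} s_j p^j`, where `m_j` is the sum of the `j`-th digits of the `u_d` and
`s_j ≤ p(p-1) m_j` because `d ≤ p² - p`. If `∑ m_j < ℓ`, the cyclic ballot lemma gives a rotation
of the digit positions after which every suffix `m_i + … + m_{ℓ-1}` is smaller than `ℓ - i`.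
Rotating positions is multiplication by a power of `p` modulo `p^ℓ - 1`, so the rotated number is
still a positive multiple of `p^ℓ - 1`; but the suffix bound makes it at most
`p(p-1)(1 + p + … + p^{ℓ-2}) = p^ℓ - p`, a contradiction.
-/

open Finset

theorem sum_range_digit_mul_pow (p n ℓ : ℕ) :
    ∑ j ∈ range ℓ, n / p ^ j % p * p ^ j = n % p ^ ℓ := by
  induction ℓ with
  | zero => simp [Nat.mod_one]
  | succ ℓ ih => rw [sum_range_succ, ih, Nat.mod_pow_succ, mul_comm]

theorem digits_sum_eq_sum_range {p n ℓ : ℕ} (hp : 2 ≤ p) (hn : n < p ^ ℓ) :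
    (Nat.digits p n).sum = ∑ j ∈ range ℓ, n / p ^ j % p := by
  induction ℓ generalizing n with
  | zero => simp_all
  | succ ℓ ih =>
    rcases Nat.eq_zero_or_pos n with rfl | hn0
    · simp
    have hdiv : n / p < p ^ ℓ := Nat.div_lt_of_lt_mul (by rwa [← pow_succ'])
    simp only [Nat.digits_def' hp hn0, List.sum_cons, ih hdiv, sum_range_succ', pow_succ',
      Nat.div_div_eq_div_mul, pow_zero, Nat.div_one, add_comm]

theorem sub_one_mul_geom_sum {p : ℕ} (hp : 1 ≤ p) (n : ℕ) :
    (p - 1) * ∑ i ∈ range n, p ^ i = p ^ n - 1 := by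
  have := geom_sum_mul (p : ℤ) n
  zify [hp, Nat.one_le_pow n p hp]
  linear_combination this

theorem sum_range_rotate {M : Type*} [AddCancelCommMonoid M] (f : ℕ → M) (ℓ q : ℕ) :
    ∑ j ∈ range ℓ, f ((j + q) % ℓ) = ∑ j ∈ range ℓ, f j := by
  induction q with
  | zero =>
    refine sum_congr rfl fun j hj => ?_
    rw [add_zero, Nat.mod_eq_of_lt (mem_range.1 hj)]
  | succ q ih =>
    have hshift := (sum_range_succ' (fun j => f ((j + q) % ℓ)) ℓ).symm.trans
      (sum_range_succ (fun j => f ((j + q) % ℓ)) ℓ)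
    rw [← ih]
    simp only [zero_add, Nat.add_mod_left] at hshift
    simpa only [add_right_comm _ 1 q, add_assoc] using add_right_cancel hshift

theorem sum_range_add_period (m : ℕ → ℕ) (ℓ k : ℕ) :
    ∑ j ∈ range (k + ℓ), m (j % ℓ) = ∑ j ∈ range k, m (j % ℓ) + ∑ j ∈ range ℓ, m j := by
  rw [add_comm k, sum_range_add, add_comm]
  congr 1
  · simp only [Nat.add_mod_left]
  · exact sum_congr rfl fun j hj => by rw [Nat.mod_eq_of_lt (mem_range.1 hj)]

/-- A form of Raney's cycle lemma. -/
theorem exists_rotate_suffix_sum_lt (m : ℕ → ℕ) {ℓ : ℕ} (hm : ∑ j ∈ range ℓ, m j < ℓ) :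
    ∃ q, ∀ i < ℓ, ∑ j ∈ Ico i ℓ, m ((j + q) % ℓ) < ℓ - i := by
  set P : ℕ → ℕ := fun k => ∑ j ∈ range k, m (j % ℓ) with hP
  have hperiod (k : ℕ) : P (k + ℓ) = P k + ∑ j ∈ range ℓ, m j := sum_range_add_period m ℓ k
  have hmin : ∃ q, q < ℓ ∧ ∀ k < ℓ, (P q : ℤ) - q ≤ (P k : ℤ) - k := by
    obtain ⟨q, hq, hq_min⟩ :=
      exists_min_image (range ℓ) (fun k => (P k : ℤ) - k) ⟨0, by simp; omega⟩
    exact ⟨q, mem_range.1 hq, fun k hk => hq_min k (mem_range.2 hk)⟩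
  classical
  -- take the first minimiser of `P k - k`, so that all earlier values are strictly larger
  refine ⟨Nat.find hmin, fun i hi => ?_⟩
  obtain ⟨hqℓ, hq_min⟩ := Nat.find_spec hmin
  set q := Nat.find hmin
  have hq_strict (k : ℕ) (hk : k < q) : (P q : ℤ) - q < (P k : ℤ) - k :=
    lt_of_not_ge fun hle =>
      Nat.find_min hmin hk ⟨hk.trans hqℓ, fun k' hk' => hle.trans (hq_min k' hk')⟩
  have hsuffix : P (i + q) + ∑ j ∈ Ico i ℓ, m ((j + q) % ℓ) = P (ℓ + q) := by
    rw [sum_Ico_add' (fun j => m (j % ℓ)), hP]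
    dsimp only
    rw [range_eq_Ico, range_eq_Ico, sum_Ico_consecutive _ (Nat.zero_le _) (by omega)]
  have hq_period := hperiod q
  rw [add_comm q] at hq_period
  rcases lt_or_ge (i + q) ℓ with hiq | hiq
  · have := hq_min (i + q) hiq
    push_cast at this
    omega
  · obtain ⟨k, hk⟩ : ∃ k, i + q = k + ℓ := ⟨i + q - ℓ, by omega⟩
    have := hq_strict k (by omega)
    have := hperiod k
    rw [hk] at hsuffix
    omega

-- Carrying the slack `n - ∑ m j` (moved to both sides) lets the induction on `n` go through.
theorem sum_mul_pow_add_le {p : ℕ} (hp : 1 ≤ p) (n : ℕ) (m : ℕ → ℕ)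
    (hm : ∀ i ≤ n, ∑ j ∈ Ico i (n + 1), m j + i ≤ n) :
    ∑ j ∈ range (n + 1), m j * p ^ j + n ≤ ∑ j ∈ range n, p ^ j + ∑ j ∈ range (n + 1), m j := by
  induction n generalizing m with
  | zero => simp
  | succ n ih =>
    have hshift (i : ℕ) : ∑ j ∈ Ico i (n + 1), m (j + 1) = ∑ j ∈ Ico (i + 1) (n + 1 + 1), m j :=
      sum_Ico_add' m i (n + 1) 1
    have ih' := ih (fun j => m (j + 1)) fun i hi => by
      rw [hshift]; have := hm (i + 1) (by omega); omega
    have htail := hm 1 (by omega)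
    rw [← hshift, ← range_eq_Ico] at htail
    simp only [sum_range_succ' _ (n + 1), sum_range_succ' (fun j => p ^ j), pow_succ,
      ← mul_assoc, ← sum_mul, pow_zero, mul_one] at ih' ⊢
    nlinarith

theorem sum_mul_pow_le_of_suffix_sum_lt {p ℓ : ℕ} (hp : 1 ≤ p) (m : ℕ → ℕ)
    (hm : ∀ i < ℓ, ∑ j ∈ Ico i ℓ, m j < ℓ - i) :
    ∑ j ∈ range ℓ, m j * p ^ j ≤ ∑ j ∈ range (ℓ - 1), p ^ j := by
  rcases ℓ with _ | n
  · simp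
  have hbound := sum_mul_pow_add_le hp n m fun i hi => by have := hm i (by omega); omega
  have htotal := hm 0 (by omega)
  rw [← range_eq_Ico] at htotal
  simp only [add_tsub_cancel_right]
  omega

theorem pow_sub_one_dvd_sum_rotate {p ℓ : ℕ} (hp : 1 ≤ p) (hℓ : ℓ ≠ 0) (s : ℕ → ℕ) (q : ℕ)
    (hs : p ^ ℓ - 1 ∣ ∑ j ∈ range ℓ, s j * p ^ j) :
    p ^ ℓ - 1 ∣ ∑ j ∈ range ℓ, s ((j + q) % ℓ) * p ^ j := by
  have hpow : (p : ZMod (p ^ ℓ - 1)) ^ ℓ = 1 := by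
    rw [← sub_eq_zero, ← Nat.cast_pow, ← Nat.cast_one (R := ZMod (p ^ ℓ - 1)),
      ← Nat.cast_sub (Nat.one_le_pow _ _ hp), ZMod.natCast_self]
  rw [← ZMod.natCast_eq_zero_iff] at hs ⊢
  push_cast at hs ⊢
  -- multiplying by `p ^ q` rotates the digits, since `p ^ ℓ = 1` modulo `p ^ ℓ - 1`
  rw [← ((IsUnit.of_pow_eq_one hpow hℓ).pow q).mul_right_eq_zero, mul_sum, ← hs,
    ← sum_range_rotate (fun j => (s j : ZMod (p ^ ℓ - 1)) * p ^ j) ℓ q]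
  refine sum_congr rfl fun j _ => ?_
  rw [← pow_eq_pow_mod _ hpow, pow_add]
  ring

theorem not_pow_sub_one_dvd_sum_mul_pow {p ℓ : ℕ} (hp : 2 ≤ p) (hℓ : ℓ ≠ 0) (s m : ℕ → ℕ)
    (hsm : ∀ j, s j ≤ p * (p - 1) * m j) (hm : ∑ j ∈ range ℓ, m j < ℓ)
    (hpos : 0 < ∑ j ∈ range ℓ, s j * p ^ j) :
    ¬ p ^ ℓ - 1 ∣ ∑ j ∈ range ℓ, s j * p ^ j := by
  intro hdvd
  obtain ⟨q, hq⟩ := exists_rotate_suffix_sum_lt m hm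
  have hdvd_rot := pow_sub_one_dvd_sum_rotate (by omega) hℓ s q hdvd
  have hs_pos : 0 < ∑ j ∈ range ℓ, s j :=
    Nat.pos_of_ne_zero fun h0 => hpos.ne' <| sum_eq_zero fun j hj => by
      rw [sum_eq_zero_iff.1 h0 j hj, zero_mul]
  have hrot_pos : 0 < ∑ j ∈ range ℓ, s ((j + q) % ℓ) * p ^ j := by
    refine hs_pos.trans_le ?_
    rw [← sum_range_rotate s ℓ q]
    exact sum_le_sum fun j _ => Nat.le_mul_of_pos_right _ (by positivity)
  have hrot_lt : ∑ j ∈ range ℓ, s ((j + q) % ℓ) * p ^ j < p ^ ℓ - 1 :=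
    calc ∑ j ∈ range ℓ, s ((j + q) % ℓ) * p ^ j
        ≤ p * (p - 1) * ∑ j ∈ range ℓ, m ((j + q) % ℓ) * p ^ j := by
          rw [mul_sum]
          exact sum_le_sum fun j _ => by rw [← mul_assoc]; gcongr; exact hsm _
      _ ≤ p * ((p - 1) * ∑ j ∈ range (ℓ - 1), p ^ j) := by
          rw [mul_assoc]
          gcongr
          exact sum_mul_pow_le_of_suffix_sum_lt (by omega) _ hq
      _ = p ^ ℓ - p := by
          rw [sub_one_mul_geom_sum (by omega), Nat.mul_sub, mul_one, ← pow_succ',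
            Nat.sub_add_cancel (by omega)]
      _ < p ^ ℓ - 1 := by
          have := Nat.one_lt_pow hℓ (by omega : 1 < p)
          omega
  exact absurd (Nat.le_of_dvd hrot_pos hdvd_rot) (not_le.2 hrot_lt)

theorem le_solWeight {p ℓ : ℕ} {D : Finset ℕ} {u : ℕ → ℕ} (hp : 2 ≤ p) (hℓ : 0 < ℓ)
    (hD : ∀ d ∈ D, d ≤ p * (p - 1)) (hu : IsModSolution p D ℓ u) :
    ℓ ≤ solWeight p D u := by
  obtain ⟨-, hu_le, hdvd, hpos⟩ := hu
  have hu_lt (d : ℕ) : u d < p ^ ℓ := by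
    have := hu_le d; have := Nat.one_le_pow ℓ p (by omega); omega
  set m : ℕ → ℕ := fun j => ∑ d ∈ D, u d / p ^ j % p
  set s : ℕ → ℕ := fun j => ∑ d ∈ D, d * (u d / p ^ j % p)
  have hweight : solWeight p D u = ∑ j ∈ range ℓ, m j := by
    rw [solWeight, sum_comm]
    exact sum_congr rfl fun d _ => digits_sum_eq_sum_range hp (hu_lt d)
  have hN : ∑ d ∈ D, d * u d = ∑ j ∈ range ℓ, s j * p ^ j := by
    simp only [s, sum_mul, mul_assoc]
    rw [sum_comm]
    refine sum_congr rfl fun d _ => ?_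
    rw [← mul_sum, sum_range_digit_mul_pow, Nat.mod_eq_of_lt (hu_lt d)]
  have hsm (j : ℕ) : s j ≤ p * (p - 1) * m j := by
    rw [mul_sum]
    exact sum_le_sum fun d hd => Nat.mul_le_mul_right _ (hD d hd)
  by_contra! hlt
  rw [hweight] at hlt
  rw [hN] at hdvd hpos
  exact not_pow_sub_one_dvd_sum_mul_pow hp hℓ.ne' s m hsm hlt hpos hdvd

theorem one_div_sub_one_le_of_mem_densitySet {p : ℕ} {D : Finset ℕ} {x : ℝ} (hp : 2 ≤ p)
    (hD : ∀ d ∈ D, d ≤ p * (p - 1)) (hx : x ∈ densitySet p D) :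
    1 / ((p : ℝ) - 1) ≤ x := by
  obtain ⟨ℓ, u, hℓ, hu, rfl⟩ := hx
  have hweight : (ℓ : ℝ) ≤ solWeight p D u := by exact_mod_cast le_solWeight hp hℓ hD hu
  have hp1 : (0 : ℝ) < p - 1 := by
    rw [sub_pos]; exact_mod_cast hp
  rw [div_le_div_iff₀ hp1 (by positivity)]
  nlinarith

theorem one_div_sub_one_mem_densitySet {p : ℕ} {D : Finset ℕ} (hp : 2 ≤ p) (hD : p - 1 ∈ D) :
    1 / ((p : ℝ) - 1) ∈ densitySet p D := by
  set u : ℕ → ℕ := Pi.single (p - 1) 1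
  have hu_self : u (p - 1) = 1 := Pi.single_eq_same _ _
  have hu_ne (d : ℕ) (hd : d ≠ p - 1) : u d = 0 := Pi.single_eq_of_ne hd _
  have hsum : ∑ d ∈ D, d * u d = p - 1 := by
    rw [sum_eq_single_of_mem _ hD fun d _ hd => by rw [hu_ne d hd, mul_zero], hu_self, mul_one]
  refine ⟨1, u, one_pos, ⟨fun d hd => hu_ne d (ne_of_mem_of_not_mem hD hd).symm,
    fun d => ?_, by rw [hsum, pow_one], by omega⟩, ?_⟩
  · rcases eq_or_ne d (p - 1) with rfl | hd
    · rw [hu_self, pow_one]; omega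
    · rw [hu_ne d hd]; exact Nat.zero_le _
  · rw [solWeight, sum_eq_single_of_mem _ hD fun d _ hd => by
        rw [hu_ne d hd, Nat.digits_zero, List.sum_nil],
      hu_self, Nat.digits_of_lt p 1 one_ne_zero (by omega)]
    simp

theorem stmt_16_general (p : ℕ) (hp : p.Prime) :
    IsLeast (densitySet p ((Finset.Icc 1 (p ^ 2 - p - 1)).filter
      (fun i => Nat.Coprime i p))) (1 / ((p : ℝ) - 1)) := by
  have hp2 := hp.two_le
  have hsq : p ^ 2 - p = p * (p - 1) := by rw [sq, Nat.mul_sub_one]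
  have hp_le : 2 * p ≤ p * p := Nat.mul_le_mul_right p hp2
  refine ⟨one_div_sub_one_mem_densitySet hp2 ?_,
    fun x hx => one_div_sub_one_le_of_mem_densitySet hp2 (fun d hd => ?_) hx⟩
  · rw [mem_filter, mem_Icc, Nat.coprime_self_sub_left (by omega)]
    refine ⟨⟨by omega, ?_⟩, Nat.coprime_one_left p⟩
    rw [hsq, Nat.mul_sub_one]
    omega
  · rw [mem_filter, mem_Icc, hsq] at hd
    omega

/-- Proposition `densp2`: for an odd prime `p`, the `p`-density of
`D = { i : 1 ≤ i ≤ p² − p − 1, gcd(i,p) = 1 }` equals `1/(p−1)`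
(attained as a minimum). -/
theorem stmt_16 (p : ℕ) (hp : p.Prime) (hodd : Odd p) :
    IsLeast (densitySet p ((Finset.Icc 1 (p ^ 2 - p - 1)).filter
      (fun i => Nat.Coprime i p))) (1 / ((p : ℝ) - 1)) :=
  stmt_16_general p hp
end

section
/- Let k be a finite field with q = p^m elements, σ : k → k the Frobenius x ↦ x^p, V a finite-dimensional k-vector space and φ : V → V an additive map satisfying φ(λv) = σ(λ)φ(v). Define V_ss = ⋂_{n≥1} Im(φ^n) and V_nil = ⋃_{n≥1} Ker(φ^n). Then V = V_ss ⊕ V_nil, both subspaces are φ-stable, and the restriction of φ to V_ss is bijective. -/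
/-!
Since `V` is finite, it is an Artinian and Noetherian `ℤ`-module, so Fitting's lemma applies to
`φ` viewed as a `ℤ`-linear endomorphism: `V` is the direct sum of `⨅ n, range φⁿ` and
`⨆ n, ker φⁿ`, and `φ` is bijective on the first summand. The only point that uses `k` is that
these additive subgroups are `k`-subspaces: `φⁿ` is semilinear for `c ↦ c ^ pⁿ`, which is
surjective on a finite field.
-/

open Function Set

section IterateSemilinear

variable {k V : Type*} [Semiring k] [AddCommMonoid V] [Module k V] {σ : k → k} {f : V → V}

theorem iterate_map_smul_of_map_smul (hf : ∀ (c : k) (v : V), f (c • v) = σ c • f v)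
    (n : ℕ) (c : k) (v : V) : f^[n] (c • v) = σ^[n] c • f^[n] v := by
  induction n generalizing c v with
  | zero => rfl
  | succ n ih => simp only [iterate_succ_apply, hf, ih]

theorem smul_mem_iInter_range_iterate (hf : ∀ (c : k) (v : V), f (c • v) = σ c • f v)
    (hσ : Surjective σ) (c : k) {v : V} (hv : v ∈ ⋂ n : ℕ, range f^[n + 1]) :
    c • v ∈ ⋂ n : ℕ, range f^[n + 1] := by
  simp only [mem_iInter, mem_range] at hv ⊢
  intro n
  obtain ⟨w, rfl⟩ := hv n
  obtain ⟨d, rfl⟩ := hσ.iterate (n + 1) c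
  exact ⟨d • w, iterate_map_smul_of_map_smul hf _ _ _⟩

theorem smul_mem_iUnion_iterate_eq_zero (hf : ∀ (c : k) (v : V), f (c • v) = σ c • f v)
    (c : k) {v : V} (hv : v ∈ ⋃ n : ℕ, {v | f^[n + 1] v = 0}) :
    c • v ∈ ⋃ n : ℕ, {v | f^[n + 1] v = 0} := by
  simp only [mem_iUnion, mem_ofPred_eq] at hv ⊢
  obtain ⟨n, hn⟩ := hv
  exact ⟨n, by rw [iterate_map_smul_of_map_smul hf, hn, smul_zero]⟩

end IterateSemilinear

theorem mapsTo_iUnion_iterate_eq_zero {α : Type*} [Zero α] {f : α → α} (hf : f 0 = 0) :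
    MapsTo f (⋃ n : ℕ, {v | f^[n + 1] v = 0}) (⋃ n : ℕ, {v | f^[n + 1] v = 0}) := by
  intro v hv
  simp only [mem_iUnion, mem_ofPred_eq] at hv ⊢
  obtain ⟨n, hn⟩ := hv
  exact ⟨n, by rw [← iterate_succ_apply, iterate_succ_apply', hn, hf]⟩

def Submodule.ofSMulMem {R k M : Type*} [Semiring R] [Semiring k] [AddCommMonoid M]
    [Module R M] [Module k M] (p : Submodule R M) (h : ∀ (c : k) {x : M}, x ∈ p → c • x ∈ p) :
    Submodule k M :=
  { p.toAddSubmonoid with smul_mem' := h }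

theorem Submodule.restrictScalars_ofSMulMem {R k M : Type*} [Semiring R] [Semiring k]
    [AddCommMonoid M] [Module R M] [Module k M] [SMul R k] [IsScalarTower R k M]
    (p : Submodule R M) (h : ∀ (c : k) {x : M}, x ∈ p → c • x ∈ p) :
    (p.ofSMulMem h).restrictScalars R = p :=
  rfl

namespace LinearMap

variable {R M : Type*} [Ring R] [AddCommGroup M] [Module R M] (f : Module.End R M)

theorem coe_iInf_range_pow :
    ((⨅ n, range (f ^ n) : Submodule R M) : Set M) = ⋂ n : ℕ, Set.range f^[n + 1] := by
  have hanti : Antitone fun n : ℕ => Set.range f^[n] :=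
    antitone_nat_of_succ_le fun n => by
      rw [iterate_succ]
      exact range_comp_subset_range _ _
  calc ((⨅ n, range (f ^ n) : Submodule R M) : Set M) = ⋂ n : ℕ, Set.range f^[n] := by
        simp only [Submodule.coe_iInf, coe_range, Module.End.coe_pow]
    _ = ⋂ n : ℕ, Set.range f^[n + 1] := (hanti.iInter_nat_add 1).symm

theorem coe_iSup_ker_pow :
    ((⨆ n, ker (f ^ n) : Submodule R M) : Set M) = ⋃ n : ℕ, {v | f^[n + 1] v = 0} := by
  have hmono : Monotone fun n : ℕ => {v | f^[n] v = 0} :=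
    monotone_nat_of_le_succ fun n v hv => by
      simp only [mem_ofPred_eq, iterate_succ_apply'] at hv ⊢
      rw [hv, map_zero]
  calc ((⨆ n, ker (f ^ n) : Submodule R M) : Set M) = ⋃ n : ℕ, {v | f^[n] v = 0} :=
        (Submodule.coe_iSup_of_chain f.iterateKer).trans (by ext; simp [Module.End.coe_pow])
    _ = ⋃ n : ℕ, {v | f^[n + 1] v = 0} := (hmono.iUnion_nat_add 1).symm

theorem mapsTo_iSup_ker_pow :
    MapsTo f (⨆ n, ker (f ^ n) : Submodule R M) (⨆ n, ker (f ^ n) : Submodule R M) := by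
  rw [coe_iSup_ker_pow]
  exact mapsTo_iUnion_iterate_eq_zero f.map_zero

theorem bijOn_iInf_range_pow [IsNoetherian R M] [IsArtinian R M] :
    BijOn f (⨅ n, range (f ^ n) : Submodule R M) (⨅ n, range (f ^ n) : Submodule R M) := by
  obtain ⟨N, hN⟩ := Filter.eventually_atTop.mp f.eventually_iInf_range_pow_eq
  have hNrange : ∀ x, x ∈ ⨅ n, range (f ^ n) ↔ x ∈ range (f ^ N) := by simp [hN N le_rfl]
  have hNrange' : ∀ x, x ∈ ⨅ n, range (f ^ n) ↔ x ∈ range (f ^ (N + 1)) := by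
    simp [hN (N + 1) N.le_succ]
  refine ⟨?mapsTo, ?injOn, ?surjOn⟩
  case mapsTo =>
    rintro _ hx
    obtain ⟨y, rfl⟩ := (hNrange _).mp hx
    exact (hNrange' _).mpr ⟨y, by rw [pow_succ', Module.End.mul_apply]⟩
  case injOn =>
    intro x hx y hy hxy
    have hker : x - y ∈ ⨆ n, ker (f ^ n) :=
      Submodule.mem_iSup_of_mem 1 (by simp [hxy])
    have hrange : x - y ∈ ⨅ n, range (f ^ n) := Submodule.sub_mem _ hx hy
    exact sub_eq_zero.mp <|
      Submodule.disjoint_def.mp f.isCompl_iSup_ker_pow_iInf_range_pow.disjoint _ hker hrange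
  case surjOn =>
    intro x hx
    obtain ⟨y, rfl⟩ := (hNrange' _).mp hx
    exact ⟨(f ^ N) y, (hNrange _).mpr ⟨y, rfl⟩, by rw [pow_succ', Module.End.mul_apply]⟩

end LinearMap

theorem stmt_18_general (p : ℕ) (hp : p.Prime)
    (k : Type*) [Field k] [Fintype k] [CharP k p]
    (V : Type*) [AddCommGroup V] [Module k V] [FiniteDimensional k V]
    (φ : V →+ V) (hφ : ∀ (c : k) (v : V), φ (c • v) = (c ^ p) • φ v) :
    ∃ S T : Submodule k V,
      (S : Set V) = ⋂ n : ℕ, Set.range (⇑φ)^[n + 1] ∧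
      (T : Set V) = ⋃ n : ℕ, {v | (⇑φ)^[n + 1] v = 0} ∧
      IsCompl S T ∧
      (∀ v ∈ S, φ v ∈ S) ∧ (∀ v ∈ T, φ v ∈ T) ∧
      Set.BijOn (⇑φ) (S : Set V) (S : Set V) := by
  have : Fact p.Prime := ⟨hp⟩
  have : Finite V := Module.finite_of_finite k
  have : IsArtinian ℤ V := isArtinian_of_finite
  let ψ := φ.toIntLinearMap
  have hS := ψ.coe_iInf_range_pow
  have hT := ψ.coe_iSup_ker_pow
  let S : Submodule k V := (⨅ n, LinearMap.range (ψ ^ n)).ofSMulMem fun c _ hv => by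
    rw [← SetLike.mem_coe, hS] at hv ⊢
    exact smul_mem_iInter_range_iterate hφ PerfectRing.bijective_frobenius.2 c hv
  let T : Submodule k V := (⨆ n, LinearMap.ker (ψ ^ n)).ofSMulMem fun c _ hv => by
    rw [← SetLike.mem_coe, hT] at hv ⊢
    exact smul_mem_iUnion_iterate_eq_zero hφ c hv
  refine ⟨S, T, hS, hT, ?_, ψ.bijOn_iInf_range_pow.mapsTo, ψ.mapsTo_iSup_ker_pow,
    ψ.bijOn_iInf_range_pow⟩
  rw [← Submodule.isCompl_restrictScalars_iff ℤ, Submodule.restrictScalars_ofSMulMem,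
    Submodule.restrictScalars_ofSMulMem]
  exact ψ.isCompl_iSup_ker_pow_iInf_range_pow.symm

/-- Fitting decomposition for a Frobenius-semilinear endomorphism of a
finite-dimensional vector space over a finite field `k` of characteristic `p`:
`V = V_ss ⊕ V_nil` where `V_ss = ⋂ Im(φ^n)` and `V_nil = ⋃ Ker(φ^n)`; both are
`k`-subspaces stable under `φ`, and `φ` restricts to a bijection of `V_ss`. -/
theorem stmt_18 (p m : ℕ) (hp : p.Prime) (hm : 0 < m)
    (k : Type*) [Field k] [Fintype k] [CharP k p]
    (hcard : Fintype.card k = p ^ m)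
    (V : Type*) [AddCommGroup V] [Module k V] [FiniteDimensional k V]
    (φ : V →+ V) (hφ : ∀ (c : k) (v : V), φ (c • v) = (c ^ p) • φ v) :
    ∃ S T : Submodule k V,
      (S : Set V) = ⋂ n : ℕ, Set.range (⇑φ)^[n + 1] ∧
      (T : Set V) = ⋃ n : ℕ, {v | (⇑φ)^[n + 1] v = 0} ∧
      IsCompl S T ∧
      (∀ v ∈ S, φ v ∈ S) ∧ (∀ v ∈ T, φ v ∈ T) ∧
      Set.BijOn (⇑φ) (S : Set V) (S : Set V) :=
  stmt_18_general p hp k V φ hφ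
end

section
/- Let k = 𝔽_q, q = p^m, V = k^N, and let φ be the σ-semilinear endomorphism of V with matrix ᵗA in some basis (σ = Frobenius). With V_ss = ⋂_n Im(φ^n) nonzero of dimension s₀ and A_ss the matrix of φ restricted to V_ss in a basis of V_ss, one has det(I − T·A^{σ^{m−1}}⋯A^{σ}·A) = det(I − T·A_ss^{σ^{m−1}}⋯A_ss^{σ}·A_ss) as polynomials in k[T]; this polynomial has degree dim_k V_ss and leading coefficient (up to sign) the norm N_{k/𝔽_p}(det A_ss). -/
/-!
Since `σ^m = id` on `𝔽_q`, the iterate `ψ = φ^m` is `k`-linear with matrix `ᵗ(A^{σ^{m-1}} ⋯ A)`,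
and `V_ss = ⋂ Im φ^n = ⋂ Im ψ^n` is the image part of the Fitting decomposition of `ψ`. On the
complementary summand `ψ` is nilpotent, so `det(1 - T ψ)` only sees `ψ|V_ss`, whose matrix is
`ᵗ(A_ss^{σ^{m-1}} ⋯ A_ss)` and which is invertible. Hence this reversed characteristic polynomial
has full degree `dim V_ss` and leading coefficient `(-1)^{s₀} det(ψ|V_ss)`, and the determinant
of the twisted product is `∏_j σ^j(det A_ss)`.
-/

open Polynomial Module

theorem Set.iInter_range_iterate_mul_eq {α : Type*} (f : α → α) {m : ℕ} (hm : 0 < m) :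
    ⋂ n, Set.range f^[m * n] = ⋂ n, Set.range f^[n + 1] := by
  have hs : Antitone fun n => Set.range f^[n] := by
    intro a b hab
    obtain ⟨c, rfl⟩ := Nat.exists_eq_add_of_le hab
    rintro _ ⟨y, rfl⟩
    exact ⟨f^[c] y, (Function.iterate_add_apply f a c y).symm⟩
  rw [hs.iInter_comp_tendsto_atTop (f := (m * ·))
      (Filter.tendsto_atTop_mono (fun n => Nat.le_mul_of_pos_left n hm) Filter.tendsto_id),
    hs.iInter_comp_tendsto_atTop (Filter.tendsto_add_atTop_nat 1)]

namespace Matrix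

section Twisted

variable {R ι : Type*} [CommSemiring R] [Fintype ι] [DecidableEq ι]

/-- The matrix `M^{σ^{n-1}} ⋯ M^{σ} M`. -/
def twistedPow (σ : R →+* R) (n : ℕ) (M : Matrix ι ι R) : Matrix ι ι R :=
  ((List.range n).map fun j => M.map (σ^[n - 1 - j])).prod

theorem twistedPow_succ (σ : R →+* R) (M : Matrix ι ι R) (n : ℕ) :
    twistedPow σ (n + 1) M = (twistedPow σ n M).map σ * M := by
  have hmap : (twistedPow σ n M).map σ =
      ((List.range n).map fun j => M.map (σ^[n - j])).prod := by
    rw [twistedPow, ← RingHom.mapMatrix_apply, map_list_prod, List.map_map]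
    refine congrArg List.prod (List.map_congr_left fun j hj => ?_)
    ext a b
    simp only [Function.comp_apply, RingHom.mapMatrix_apply, map_apply]
    rw [← Function.iterate_succ_apply' σ]
    congr 2
    have := List.mem_range.mp hj
    omega
  rw [hmap, twistedPow, List.range_succ, List.map_append, List.prod_append]
  simp

theorem twistedPow_frobenius (p : ℕ) [ExpChar R p] (M : Matrix ι ι R) (n : ℕ) :
    twistedPow (frobenius R p) n M
      = ((List.range n).map fun j => M.map (fun x => x ^ p ^ (n - 1 - j))).prod := by
  simp only [twistedPow, ← coe_iterateFrobenius]
  rfl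

theorem det_twistedPow {R : Type*} [CommRing R] (σ : R →+* R) (M : Matrix ι ι R) (n : ℕ) :
    (twistedPow σ n M).det = ∏ j ∈ Finset.range n, σ^[j] M.det := by
  induction n with
  | zero => simp [twistedPow]
  | succ n ih =>
    rw [twistedPow_succ, det_mul, ← RingHom.mapMatrix_apply, ← RingHom.map_det, ih, map_prod,
      Finset.prod_range_succ']
    simp only [← Function.iterate_succ_apply' σ, Function.iterate_zero_apply]

def semilinearMulVec (σ : R →+* R) (M : Matrix ι ι R) : (ι → R) →ₛₗ[σ] (ι → R) where
  toFun v := Mᵀ *ᵥ (σ ∘ v)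
  map_add' v w := by
    have : σ ∘ (v + w) = σ ∘ v + σ ∘ w := by ext; simp
    rw [this, mulVec_add]
  map_smul' c v := by
    have : σ ∘ (c • v) = σ c • (σ ∘ v) := by ext; simp
    rw [this, mulVec_smul]

theorem semilinearMulVec_single (σ : R →+* R) (M : Matrix ι ι R) (i : ι) :
    semilinearMulVec σ M (Pi.single i 1) = ∑ j, M i j • Pi.single j 1 := by
  ext a
  simp [semilinearMulVec, mulVec, dotProduct, Pi.single_apply, Finset.sum_apply]

end Twisted

section CharpolyRev

variable {R n : Type*} [CommRing R] [Fintype n] [DecidableEq n] {M : Matrix n n R}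

theorem natTrailingDegree_charpoly_of_det_ne_zero (h : M.det ≠ 0) :
    M.charpoly.natTrailingDegree = 0 := by
  rw [det_eq_sign_charpoly_coeff] at h
  exact natTrailingDegree_eq_zero.mpr (Or.inr (right_ne_zero_of_mul h))

theorem natDegree_charpolyRev_of_det_ne_zero [Nontrivial R] (h : M.det ≠ 0) :
    M.charpolyRev.natDegree = Fintype.card n := by
  rw [← reverse_charpoly, reverse_natDegree, natTrailingDegree_charpoly_of_det_ne_zero h,
    charpoly_natDegree_eq_dim, Nat.sub_zero]

theorem leadingCoeff_charpolyRev_of_det_ne_zero (h : M.det ≠ 0) :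
    M.charpolyRev.leadingCoeff = (-1) ^ Fintype.card n * M.det := by
  rw [← reverse_charpoly, reverse_leadingCoeff, trailingCoeff,
    natTrailingDegree_charpoly_of_det_ne_zero h, det_eq_sign_charpoly_coeff, ← mul_assoc,
    ← pow_add, Even.neg_one_pow ⟨_, rfl⟩, one_mul]

end CharpolyRev

end Matrix

open Matrix

namespace LinearMap

section Semilinear

variable {R M ι : Type*} [CommSemiring R] [AddCommMonoid M] [Module R M] {σ : R →+* R}

theorem iterate_map_smulₛₗ (f : M →ₛₗ[σ] M) (n : ℕ) (c : R) (x : M) :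
    f^[n] (c • x) = σ^[n] c • f^[n] x := by
  induction n with
  | zero => rfl
  | succ n ih => simp only [Function.iterate_succ_apply', ih, map_smulₛₗ]

theorem iterate_apply_eq_sum_twistedPow [Fintype ι] [DecidableEq ι] (f : M →ₛₗ[σ] M)
    {w : ι → M} {A : Matrix ι ι R} (hw : ∀ i, f (w i) = ∑ j, A i j • w j) (n : ℕ) (i : ι) :
    f^[n] (w i) = ∑ j, twistedPow σ n A i j • w j := by
  induction n with
  | zero => simp [twistedPow, one_apply]
  | succ n ih =>
    rw [Function.iterate_succ_apply', ih, map_sum]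
    simp only [map_smulₛₗ, hw, Finset.smul_sum, smul_smul, twistedPow_succ, mul_apply,
      Finset.sum_smul]
    rw [Finset.sum_comm]
    rfl

def iterateLinearOfIterateEqId (f : M →ₛₗ[σ] M) (m : ℕ) (hσ : ∀ c, σ^[m] c = c) :
    M →ₗ[R] M where
  toFun := f^[m]
  map_add' := iterate_map_add f m
  map_smul' c x := by rw [iterate_map_smulₛₗ, hσ]; rfl

@[simp]
theorem coe_iterateLinearOfIterateEqId (f : M →ₛₗ[σ] M) (m : ℕ) (hσ : ∀ c, σ^[m] c = c) :
    ⇑(f.iterateLinearOfIterateEqId m hσ) = f^[m] :=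
  rfl

end Semilinear

section Fitting

variable {R M : Type*} [CommRing R] [AddCommGroup M] [Module R M]

theorem toMatrix_eq_transpose_of_apply_eq_sum {ι : Type*} [Fintype ι] [DecidableEq ι]
    {g : M →ₗ[R] M} (b : Basis ι R M) {A : Matrix ι ι R} (h : ∀ i, g (b i) = ∑ j, A i j • b j) :
    toMatrix b b g = Aᵀ := by
  rw [← toMatrix_toLin b b Aᵀ]
  exact congrArg _ (b.ext fun i => by simp [h])

theorem mapsTo_iInf_range_pow (φ : End R M) :
    ∀ x ∈ ⨅ n, range (φ ^ n), φ x ∈ ⨅ n, range (φ ^ n) := by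
  simp only [Submodule.mem_iInf, mem_range]
  intro x hx n
  obtain ⟨y, rfl⟩ := hx n
  exact ⟨φ y, (LinearMap.congr_fun (Commute.self_pow φ n).eq y).symm⟩

variable {K V : Type*} [Field K] [AddCommGroup V] [Module K V] [FiniteDimensional K V]

theorem charpoly_eq_mul_of_isCompl (φ : End K V) {U W : Submodule K V} (h : IsCompl U W)
    (hU : ∀ x ∈ U, φ x ∈ U) (hW : ∀ x ∈ W, φ x ∈ W) :
    φ.charpoly = (φ.restrict hU).charpoly * (φ.restrict hW).charpoly := by
  let e := Submodule.prodEquivOfIsCompl U W h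
  have : (φ.restrict hU).prodMap (φ.restrict hW) = e.symm.conj φ := by
    refine LinearMap.ext fun z => ?_
    rw [LinearEquiv.conj_apply_apply, LinearEquiv.symm_symm, eq_comm, LinearEquiv.symm_apply_eq]
    simp [e]
  rw [← e.symm.charpoly_conj φ, ← this, charpoly_prodMap]

theorem exists_isCompl_ker_pow_iInf_range_pow (φ : End K V) :
    ∃ n, 0 < n ∧ IsCompl (ker (φ ^ n)) (⨅ k, range (φ ^ k)) := by
  obtain ⟨n, hn⟩ := Filter.eventually_atTop.mp
    (φ.eventually_isCompl_ker_pow_range_pow.and φ.eventually_iInf_range_pow_eq)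
  obtain ⟨hc, hr⟩ := hn (n + 1) n.le_succ
  exact ⟨n + 1, n.succ_pos, hr ▸ hc⟩

theorem ker_restrict_iInf_range_pow (φ : End K V) :
    ker (φ.restrict (mapsTo_iInf_range_pow φ)) = ⊥ := by
  obtain ⟨n, hn, hc⟩ := exists_isCompl_ker_pow_iInf_range_pow φ
  refine ker_eq_bot'.mpr fun ⟨x, hxW⟩ hx => Subtype.ext ?_
  have hxK : x ∈ ker (φ ^ n) := by
    rw [mem_ker, ← Nat.sub_add_cancel hn, pow_succ, Module.End.mul_apply,
      show φ x = 0 from congrArg Subtype.val hx, map_zero]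
  exact Submodule.disjoint_def.mp hc.disjoint x hxK hxW

theorem charpoly_eq_X_pow_mul_charpoly_restrict_iInf_range_pow (φ : End K V) :
    ∃ r, φ.charpoly = X ^ r * (φ.restrict (mapsTo_iInf_range_pow φ)).charpoly := by
  obtain ⟨n, -, hc⟩ := exists_isCompl_ker_pow_iInf_range_pow φ
  have hK : ∀ x ∈ ker (φ ^ n), φ x ∈ ker (φ ^ n) := fun x hx => by
    rw [mem_ker] at hx ⊢
    rw [← Module.End.mul_apply, ← (Commute.self_pow φ n).eq, Module.End.mul_apply, hx, map_zero]
  refine ⟨finrank K (ker (φ ^ n)), ?_⟩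
  rw [charpoly_eq_mul_of_isCompl φ hc hK, (charpoly_eq_X_pow_iff _).mpr]
  rintro ⟨x, hx⟩
  exact ⟨n, Subtype.ext (by rw [Module.End.pow_restrict, coe_restrict_apply]; exact hx)⟩

variable {ι κ : Type*} [Fintype ι] [DecidableEq ι] [Fintype κ] [DecidableEq κ]

theorem det_ne_zero_of_restrict_iInf_range_pow (φ : End K V)
    (b : Basis κ K ↥(⨅ n, range (φ ^ n))) {B : Matrix κ κ K}
    (hB : ∀ i, φ.restrict (mapsTo_iInf_range_pow φ) (b i) = ∑ j, B i j • b j) : B.det ≠ 0 := by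
  rw [← det_transpose, ← toMatrix_eq_transpose_of_apply_eq_sum b hB, det_toMatrix]
  exact ((not_hasEigenvalue_zero_tfae _).out 3 4).mpr (ker_restrict_iInf_range_pow φ)

theorem charpolyRev_eq_of_restrict_iInf_range_pow (φ : End K V) (e : Basis ι K V)
    (b : Basis κ K ↥(⨅ n, range (φ ^ n))) {A : Matrix ι ι K} {B : Matrix κ κ K}
    (hA : ∀ i, φ (e i) = ∑ j, A i j • e j)
    (hB : ∀ i, φ.restrict (mapsTo_iInf_range_pow φ) (b i) = ∑ j, B i j • b j) :
    A.charpolyRev = B.charpolyRev := by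
  obtain ⟨r, hr⟩ := charpoly_eq_X_pow_mul_charpoly_restrict_iInf_range_pow φ
  rw [← reverse_charpoly, ← reverse_charpoly, ← charpoly_transpose, ← charpoly_transpose B,
    ← toMatrix_eq_transpose_of_apply_eq_sum e hA, ← toMatrix_eq_transpose_of_apply_eq_sum b hB,
    charpoly_toMatrix, charpoly_toMatrix, hr, reverse_X_pow_mul]

end Fitting

end LinearMap

open LinearMap in
theorem stmt_19_general (p m N s₀ : ℕ) (hp : p.Prime) (hm : 0 < m)
    (k : Type*) [Field k] [Fintype k] [CharP k p]
    (hcard : Fintype.card k = p ^ m)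
    (A : Matrix (Fin N) (Fin N) k)
    (φ : (Fin N → k) → (Fin N → k))
    (hφ : ∀ v, φ v = A.transpose.mulVec (fun j => v j ^ p))
    (S : Submodule k (Fin N → k))
    (hS : (S : Set (Fin N → k)) = ⋂ n : ℕ, Set.range φ^[n + 1])
    (b : Module.Basis (Fin s₀) k S)
    (Ass : Matrix (Fin s₀) (Fin s₀) k)
    (hAss : ∀ i, φ ((b i : Fin N → k)) = ∑ j, Ass i j • ((b j : Fin N → k))) :
    ((1 : Matrix (Fin N) (Fin N) (Polynomial k)) - (Polynomial.X : Polynomial k) •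
        (((List.range m).map
          (fun j => A.map (fun x => x ^ p ^ (m - 1 - j)))).prod).map Polynomial.C).det
      = ((1 : Matrix (Fin s₀) (Fin s₀) (Polynomial k)) - (Polynomial.X : Polynomial k) •
        (((List.range m).map
          (fun j => Ass.map (fun x => x ^ p ^ (m - 1 - j)))).prod).map Polynomial.C).det ∧
    ((1 : Matrix (Fin N) (Fin N) (Polynomial k)) - (Polynomial.X : Polynomial k) •
        (((List.range m).map
          (fun j => A.map (fun x => x ^ p ^ (m - 1 - j)))).prod).map Polynomial.C).det.natDegree
      = s₀ ∧
    ((1 : Matrix (Fin N) (Fin N) (Polynomial k)) - (Polynomial.X : Polynomial k) •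
        (((List.range m).map
          (fun j => A.map (fun x => x ^ p ^ (m - 1 - j)))).prod).map Polynomial.C).det.leadingCoeff
      = (-1) ^ s₀ * ∏ j ∈ Finset.range m, Ass.det ^ p ^ j := by
  have := Fact.mk hp
  obtain rfl : φ = semilinearMulVec (frobenius k p) A := funext hφ
  have hσ : ∀ c : k, (frobenius k p)^[m] c = c := fun c => by
    rw [iterate_frobenius, ← hcard, FiniteField.pow_card]
  set ψ := (semilinearMulVec (frobenius k p) A).iterateLinearOfIterateEqId m hσ
  obtain rfl : S = ⨅ n, range (ψ ^ n) := SetLike.coe_injective <| by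
    rw [hS, ← Set.iInter_range_iterate_mul_eq _ hm]
    simp only [Submodule.coe_iInf, coe_range, Module.End.coe_pow, coe_iterateLinearOfIterateEqId, ψ,
      Function.iterate_mul]
  have hψA : ∀ i, ψ (Pi.basisFun k (Fin N) i)
      = ∑ j, twistedPow (frobenius k p) m A i j • Pi.basisFun k (Fin N) j :=
    iterate_apply_eq_sum_twistedPow _ (fun i => by simpa using semilinearMulVec_single _ A i) m
  have hψAss : ∀ i, ψ.restrict (mapsTo_iInf_range_pow ψ) (b i)
      = ∑ j, twistedPow (frobenius k p) m Ass i j • b j := fun i =>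
    Subtype.ext (by simpa [ψ] using iterate_apply_eq_sum_twistedPow _ hAss m i)
  have hdet := det_ne_zero_of_restrict_iInf_range_pow ψ b hψAss
  simp only [← twistedPow_frobenius, ← charpolyRev.eq_1]
  rw [charpolyRev_eq_of_restrict_iInf_range_pow ψ (Pi.basisFun k (Fin N)) b hψA hψAss,
    natDegree_charpolyRev_of_det_ne_zero hdet, leadingCoeff_charpolyRev_of_det_ne_zero hdet,
    det_twistedPow]
  simp [iterate_frobenius]

/-- Lemma `semilincharpol`: let `φ` be the Frobenius-semilinear endomorphism of
`k^N` (`k = 𝔽_q`, `q = p^m`) with matrix `ᵗA`, i.e. `φ(v) = ᵗA · σ(v)`. If the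
semisimple part `V_ss = ⋂ Im(φ^n)` is nonzero, with basis `b` of size `s₀` and
`A_ss` the matrix of `φ|_{V_ss}` in that basis, then
`det(I − T·A^{σ^{m−1}}⋯A^{σ}·A) = det(I − T·A_ss^{σ^{m−1}}⋯A_ss^{σ}·A_ss)`;
this polynomial has degree `s₀ = dim V_ss` and leading coefficient (up to sign)
`N_{k/𝔽_p}(det A_ss) = ∏_{j<m} (det A_ss)^{p^j}`. -/
theorem stmt_19 (p m N s₀ : ℕ) (hp : p.Prime) (hm : 0 < m)
    (k : Type*) [Field k] [Fintype k] [CharP k p]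
    (hcard : Fintype.card k = p ^ m)
    (A : Matrix (Fin N) (Fin N) k)
    (φ : (Fin N → k) → (Fin N → k))
    (hφ : ∀ v, φ v = A.transpose.mulVec (fun j => v j ^ p))
    (S : Submodule k (Fin N → k))
    (hS : (S : Set (Fin N → k)) = ⋂ n : ℕ, Set.range φ^[n + 1])
    (hSne : S ≠ ⊥)
    (b : Module.Basis (Fin s₀) k S)
    (Ass : Matrix (Fin s₀) (Fin s₀) k)
    (hAss : ∀ i, φ ((b i : Fin N → k)) = ∑ j, Ass i j • ((b j : Fin N → k))) :
    ((1 : Matrix (Fin N) (Fin N) (Polynomial k)) - (Polynomial.X : Polynomial k) •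
        (((List.range m).map
          (fun j => A.map (fun x => x ^ p ^ (m - 1 - j)))).prod).map Polynomial.C).det
      = ((1 : Matrix (Fin s₀) (Fin s₀) (Polynomial k)) - (Polynomial.X : Polynomial k) •
        (((List.range m).map
          (fun j => Ass.map (fun x => x ^ p ^ (m - 1 - j)))).prod).map Polynomial.C).det ∧
    ((1 : Matrix (Fin N) (Fin N) (Polynomial k)) - (Polynomial.X : Polynomial k) •
        (((List.range m).map
          (fun j => A.map (fun x => x ^ p ^ (m - 1 - j)))).prod).map Polynomial.C).det.natDegree
      = s₀ ∧
    ((1 : Matrix (Fin N) (Fin N) (Polynomial k)) - (Polynomial.X : Polynomial k) •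
        (((List.range m).map
          (fun j => A.map (fun x => x ^ p ^ (m - 1 - j)))).prod).map Polynomial.C).det.leadingCoeff
      = (-1) ^ s₀ * ∏ j ∈ Finset.range m, Ass.det ^ p ^ j :=
  stmt_19_general p m N s₀ hp hm k hcard A φ hφ S hS b Ass hAss
end
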